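/- arXiv:1812.00105 — 13 statements merged into one kernel-verified Lean document; each statement's English description precedes it below -/
import Mathlib

section
/- Let α be a finite nonempty type and let μ and ν be probability measures on α. Then every coupling γ of μ and ν satisfies γ {z : α × α | z.1 = z.2} ≤ ∑_{a : α} min (μ {a}) (ν {a}), and there exists a coupling γ of μ and ν for which γ {z | z.1 = z.2} = ∑_{a : α} min (μ {a}) (ν {a}). In particular, the maximal probability that two random variables with distributions μ and ν coincide, over all couplings, equals ∑_{a} min (μ {a}) (ν {a}). -/
/-! A coupling puts mass at most `(μ ⊓ ν) univ` on the diagonal: for every set `t` the diagonal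
lies in `t ×ˢ univ ∪ univ ×ˢ tᶜ`, whose mass is at most `μ t + ν tᶜ`, and `(μ ⊓ ν) univ` is the
infimum of these sums. The bound is attained by placing `μ ⊓ ν` on the diagonal and coupling the
residuals `μ - μ ⊓ ν` and `ν - μ ⊓ ν`, which have equal mass, independently. On a finite type
`(μ ⊓ ν) {a} = min (μ {a}) (ν {a})`. -/

open MeasureTheory Set
open scoped ENNReal

namespace MeasureTheory.Measure

variable {α : Type*} [MeasurableSpace α]

lemma inf_apply_singleton [MeasurableSingletonClass α] (μ ν : Measure α) (a : α) :
    (μ ⊓ ν) {a} = min (μ {a}) (ν {a}) := by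
  rw [inf_apply (measurableSet_singleton a)]
  refine le_antisymm (le_min (sInf_le ⟨{a}, by simp⟩) (sInf_le ⟨∅, by simp⟩)) (le_sInf ?_)
  rintro _ ⟨t, rfl⟩
  by_cases ha : a ∈ t
  · simp [inter_eq_right.2 (singleton_subset_iff.2 ha), ha]
  · simp [ha]

lemma inf_apply_univ_eq_sum_min [Fintype α] [MeasurableSingletonClass α] (μ ν : Measure α) :
    (μ ⊓ ν) univ = ∑ a, min (μ {a}) (ν {a}) := by
  rw [← Finset.coe_univ, ← sum_measure_singleton]
  simp only [inf_apply_singleton]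

instance isFiniteMeasure_inf (μ ν : Measure α) [IsFiniteMeasure μ] :
    IsFiniteMeasure (μ ⊓ ν) :=
  isFiniteMeasure_of_le μ inf_le_left

lemma measure_diagonal_le_inf_apply_univ {γ : Measure (α × α)} {μ ν : Measure α}
    (hfst : γ.map Prod.fst = μ) (hsnd : γ.map Prod.snd = ν) :
    γ (diagonal α) ≤ (μ ⊓ ν) univ := by
  rw [inf_apply MeasurableSet.univ]
  refine le_sInf ?_
  rintro _ ⟨t, rfl⟩
  calc γ (diagonal α) ≤ γ (Prod.fst ⁻¹' t ∪ Prod.snd ⁻¹' tᶜ) :=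
        measure_mono fun z (hz : z.1 = z.2) => by by_cases h : z.1 ∈ t <;> simp_all
    _ ≤ γ (Prod.fst ⁻¹' t) + γ (Prod.snd ⁻¹' tᶜ) := measure_union_le _ _
    _ ≤ μ t + ν tᶜ := by
        rw [← hfst, ← hsnd]
        exact add_le_add (le_map_apply measurable_fst.aemeasurable _)
          (le_map_apply measurable_snd.aemeasurable _)
    _ = μ (t ∩ univ) + ν (tᶜ ∩ univ) := by simp only [inter_univ]

lemma inv_mul_smul_eq_self {P : Measure α} [IsFiniteMeasure P] {c : ℝ≥0∞} (h : P univ = c) :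
    (c⁻¹ * c) • P = P := by
  rcases eq_or_ne c 0 with rfl | hc
  · simp [measure_univ_eq_zero.1 h]
  · rw [ENNReal.inv_mul_cancel hc (h ▸ measure_ne_top P univ), one_smul]

lemma sub_inf_apply_univ_comm {μ ν : Measure α} [IsFiniteMeasure μ] (h : μ univ = ν univ) :
    (ν - μ ⊓ ν) univ = (μ - μ ⊓ ν) univ := by
  rw [sub_apply .univ inf_le_left, sub_apply .univ inf_le_right, h]

/-- `(μ - μ ⊓ ν) univ` may vanish; then `0⁻¹ = ∞` multiplies the zero measure. -/
noncomputable def maximalCoupling (μ ν : Measure α) : Measure (α × α) :=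
  (μ ⊓ ν).map Function.diag +
    ((μ - μ ⊓ ν) univ)⁻¹ • (μ - μ ⊓ ν).prod (ν - μ ⊓ ν)

lemma inf_apply_univ_le_maximalCoupling_diagonal (μ ν : Measure α) :
    (μ ⊓ ν) univ ≤ maximalCoupling μ ν (diagonal α) :=
  calc (μ ⊓ ν) univ ≤ (μ ⊓ ν) (Function.diag ⁻¹' diagonal α) :=
        measure_mono fun x _ => mem_diagonal x
    _ ≤ (μ ⊓ ν).map Function.diag (diagonal α) := le_map_apply measurable_diag.aemeasurable _
    _ ≤ maximalCoupling μ ν (diagonal α) := le_self_add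

section maximalCoupling

variable {μ ν : Measure α} [IsFiniteMeasure μ] [IsFiniteMeasure ν]

lemma map_fst_maximalCoupling (h : μ univ = ν univ) :
    (maximalCoupling μ ν).map Prod.fst = μ := by
  have hres := sub_inf_apply_univ_comm h
  rw [maximalCoupling, Measure.map_add _ _ measurable_fst, map_map measurable_fst measurable_diag,
    Function.fst_comp_diag, map_id, Measure.map_smul, map_fst_prod, smul_smul, ← hres,
    inv_mul_smul_eq_self hres.symm, add_comm, sub_add_cancel_of_le inf_le_left]

lemma map_snd_maximalCoupling (h : μ univ = ν univ) :
    (maximalCoupling μ ν).map Prod.snd = ν := by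
  rw [maximalCoupling, Measure.map_add _ _ measurable_snd, map_map measurable_snd measurable_diag,
    Function.snd_comp_diag, map_id, Measure.map_smul, map_snd_prod, smul_smul,
    inv_mul_smul_eq_self (sub_inf_apply_univ_comm h), add_comm,
    sub_add_cancel_of_le inf_le_right]

lemma maximalCoupling_diagonal (h : μ univ = ν univ) :
    maximalCoupling μ ν (diagonal α) = (μ ⊓ ν) univ :=
  le_antisymm
    (measure_diagonal_le_inf_apply_univ (map_fst_maximalCoupling h) (map_snd_maximalCoupling h))
    (inf_apply_univ_le_maximalCoupling_diagonal μ ν)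

end maximalCoupling

end MeasureTheory.Measure

theorem maximal_coupling_finite_general {α : Type*} [Fintype α]
    [MeasurableSpace α] [MeasurableSingletonClass α]
    (μ ν : Measure α) [IsProbabilityMeasure μ] [IsProbabilityMeasure ν] :
    (∀ γ : Measure (α × α), IsProbabilityMeasure γ →
      γ.map Prod.fst = μ → γ.map Prod.snd = ν →
      (γ {z : α × α | z.1 = z.2}).toReal ≤ ∑ a : α, min (μ {a}).toReal (ν {a}).toReal) ∧
    (∃ γ : Measure (α × α), IsProbabilityMeasure γ ∧
      γ.map Prod.fst = μ ∧ γ.map Prod.snd = ν ∧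
      (γ {z : α × α | z.1 = z.2}).toReal = ∑ a : α, min (μ {a}).toReal (ν {a}).toReal) := by
  have hmass : μ univ = ν univ := by simp
  have hsum : ((μ ⊓ ν) univ).toReal = ∑ a : α, min (μ {a}).toReal (ν {a}).toReal := by
    rw [Measure.inf_apply_univ_eq_sum_min, ENNReal.toReal_sum fun a _ =>
      ((min_le_left _ _).trans_lt (measure_lt_top μ _)).ne]
    exact Finset.sum_congr rfl fun a _ =>
      ENNReal.toReal_min (measure_ne_top μ _) (measure_ne_top ν _)
  refine ⟨fun γ _ hfst hsnd => ?_, Measure.maximalCoupling μ ν, ?_,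
    Measure.map_fst_maximalCoupling hmass, Measure.map_snd_maximalCoupling hmass, ?_⟩
  · rw [← hsum]
    exact ENNReal.toReal_mono (measure_ne_top _ _)
      (Measure.measure_diagonal_le_inf_apply_univ hfst hsnd)
  · have : IsProbabilityMeasure ((Measure.maximalCoupling μ ν).map Prod.fst) := by
      rwa [Measure.map_fst_maximalCoupling hmass]
    exact Measure.isProbabilityMeasure_of_map Prod.fst
  · rw [← hsum]
    exact congrArg ENNReal.toReal (Measure.maximalCoupling_diagonal hmass)

/-- The maximal probability that two random variables with distributions `μ` and `ν`
on a finite type coincide, over all couplings, equals `∑ a, min (μ {a}) (ν {a})`. -/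
theorem maximal_coupling_finite {α : Type*} [Fintype α] [Nonempty α]
    [MeasurableSpace α] [MeasurableSingletonClass α]
    (μ ν : Measure α) [IsProbabilityMeasure μ] [IsProbabilityMeasure ν] :
    (∀ γ : Measure (α × α), IsProbabilityMeasure γ →
      γ.map Prod.fst = μ → γ.map Prod.snd = ν →
      (γ {z : α × α | z.1 = z.2}).toReal ≤ ∑ a : α, min (μ {a}).toReal (ν {a}).toReal) ∧
    (∃ γ : Measure (α × α), IsProbabilityMeasure γ ∧
      γ.map Prod.fst = μ ∧ γ.map Prod.snd = ν ∧
      (γ {z : α × α | z.1 = z.2}).toReal = ∑ a : α, min (μ {a}).toReal (ν {a}).toReal) :=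
  maximal_coupling_finite_general μ ν
end

section
/- Let n be a natural number and p : Fin n → ℝ with 0 ≤ p i ≤ 1 for every i. Then there exists a probability measure μ on (Fin n → Bool) such that μ {f | f i = true} = p i for every i, and μ {f | f i = f j} = 1 − |p i − p j| for all i and j. (Existence of a multimaximal coupling of any finite family of Bernoulli distributions.) -/
open MeasureTheory

lemma vol_between {a b : ℝ} {S : Set ℝ} (h1 : Set.Ioo a b ⊆ S) (h2 : S ⊆ Set.Icc a b) :
    volume S = ENNReal.ofReal (b - a) := by
  apply le_antisymm
  · calc volume S ≤ volume (Set.Icc a b) := measure_mono h2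
      _ = ENNReal.ofReal (b - a) := Real.volume_Icc
  · calc ENNReal.ofReal (b - a) = volume (Set.Ioo a b) := Real.volume_Ioo.symm
      _ ≤ volume S := measure_mono h1

/-- Existence of a multimaximal coupling of any finite family of Bernoulli
distributions. -/
theorem multimaximal_coupling_exists (n : ℕ) (p : Fin n → ℝ)
    (hp : ∀ i, 0 ≤ p i ∧ p i ≤ 1) :
    ∃ μ : Measure (Fin n → Bool), IsProbabilityMeasure μ ∧
      (∀ i, (μ {f : Fin n → Bool | f i = true}).toReal = p i) ∧
      (∀ i j, (μ {f : Fin n → Bool | f i = f j}).toReal = 1 - |p i - p j|) := by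
  set T : ℝ → (Fin n → Bool) := fun u i => if u < p i then true else false with hTdef
  have hT : Measurable T := by
    apply measurable_pi_lambda
    intro i
    exact Measurable.ite measurableSet_Iio measurable_const measurable_const
  set ν : Measure ℝ := volume.restrict (Set.Ioc 0 1) with hνdef
  have hνprob : IsProbabilityMeasure ν := by
    constructor
    simp [hνdef, Real.volume_Ioc]
  set μ : Measure (Fin n → Bool) := ν.map T with hμdef
  have hμprob : IsProbabilityMeasure μ := Measure.isProbabilityMeasure_map hT.aemeasurable
  have hmeas : ∀ S : Set (Fin n → Bool), MeasurableSet S := fun S => (Set.toFinite S).measurableSet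
  refine ⟨μ, hμprob, ?_, ?_⟩
  · -- marginals
    intro i
    rw [hμdef, Measure.map_apply hT (hmeas _), hνdef,
      Measure.restrict_apply ((hmeas _).preimage hT)]
    have hpre : T ⁻¹' {f : Fin n → Bool | f i = true} = Set.Iio (p i) := by
      ext u
      simp [hTdef, Set.mem_preimage]
    rw [hpre]
    have hv : volume (Set.Iio (p i) ∩ Set.Ioc 0 1) = ENNReal.ofReal (p i - 0) := by
      apply vol_between
      · rintro u ⟨h0, h1⟩
        exact ⟨h1, h0, le_of_lt (lt_of_lt_of_le h1 (hp i).2)⟩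
      · rintro u ⟨h1, h0, _⟩
        exact ⟨le_of_lt h0, le_of_lt h1⟩
    rw [hv, sub_zero, ENNReal.toReal_ofReal (hp i).1]
  · -- agreement probabilities
    have key : ∀ i j, p i ≤ p j →
        (μ {f : Fin n → Bool | f i = f j}).toReal = 1 - |p i - p j| := by
      intro i j hij
      have hcompl : μ {f : Fin n → Bool | f i = f j} =
          1 - μ {f : Fin n → Bool | f i = f j}ᶜ := by
        rw [measure_compl (hmeas _) (measure_ne_top μ _), measure_univ,
          ENNReal.sub_sub_cancel ENNReal.one_ne_top prob_le_one]
      have hdis : μ {f : Fin n → Bool | f i = f j}ᶜ = ENNReal.ofReal (p j - p i) := by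
        rw [hμdef, Measure.map_apply hT ((hmeas _).compl), hνdef,
          Measure.restrict_apply (((hmeas _).compl).preimage hT)]
        apply vol_between
        · rintro u ⟨h1, h2⟩
          constructor
          · simp only [Set.mem_preimage, Set.mem_compl_iff, Set.mem_setOf_eq, hTdef]
            rw [if_neg (not_lt.mpr (le_of_lt h1)), if_pos h2]
            simp
          · exact ⟨lt_of_le_of_lt (hp i).1 h1, le_of_lt (lt_of_lt_of_le h2 (hp j).2)⟩
        · rintro u ⟨hu, h0, h1'⟩
          simp only [Set.mem_preimage, Set.mem_compl_iff, Set.mem_setOf_eq, hTdef] at hu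
          by_cases hi : u < p i
          · exfalso
            rw [if_pos hi, if_pos (lt_of_lt_of_le hi hij)] at hu
            exact hu rfl
          · by_cases hj : u < p j
            · exact ⟨not_lt.mp hi, le_of_lt hj⟩
            · exfalso
              rw [if_neg hi, if_neg hj] at hu
              exact hu rfl
      rw [hcompl, hdis, ENNReal.toReal_sub_of_le (ENNReal.ofReal_le_one.mpr (by
            have := (hp i).1; have := (hp j).2; linarith)) ENNReal.one_ne_top,
        ENNReal.toReal_one, ENNReal.toReal_ofReal (by linarith),
        abs_of_nonpos (by linarith)]
      ring
    intro i j
    rcases le_total (p i) (p j) with h | h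
    · exact key i j h
    · have hset : {f : Fin n → Bool | f i = f j} = {f : Fin n → Bool | f j = f i} := by
        ext f; exact eq_comm
      rw [hset, key j i h, abs_sub_comm]
end

section
/- Let n be a natural number and p : Fin n → ℝ with 0 ≤ p i ≤ 1 for every i. If μ and μ' are two probability measures on (Fin n → Bool) that are both multimaximal couplings of the Bernoulli family p (that is, each has μ {f | f i = true} = p i for every i and μ {f | f i = f j} = 1 − |p i − p j| for all i, j, and likewise for μ'), then μ = μ'. (Uniqueness of the multimaximal coupling of a finite family of Bernoulli distributions.) -/
open MeasureTheory

section
variable {n : ℕ} {p : Fin n → ℝ}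

lemma meas_all (s : Set (Fin n → Bool)) : MeasurableSet s :=
  (Set.toFinite s).measurableSet

lemma sandwich (μ : Measure (Fin n → Bool)) (x : Fin n → Bool)
    (D : Set (Fin n → Bool)) (h1 : {x} ⊆ D) (h2 : μ (D \ {x}) = 0) : μ D = μ {x} := by
  refine le_antisymm ?_ (measure_mono h1)
  calc μ D = μ ({x} ∪ (D \ {x})) := by rw [Set.union_diff_cancel h1]
    _ ≤ μ {x} + μ (D \ {x}) := measure_union_le _ _
    _ = μ {x} := by rw [h2, add_zero]

variable (μ : Measure (Fin n → Bool)) [IsProbabilityMeasure μ]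
  (hmarg : ∀ i, (μ {f : Fin n → Bool | f i = true}).toReal = p i)
  (hmax : ∀ i j, (μ {f : Fin n → Bool | f i = f j}).toReal = 1 - |p i - p j|)

include hmarg hmax

lemma diff_toReal (i j : Fin n) :
    (μ ({f : Fin n → Bool | f i = true} \ {f | f j = true})).toReal = max 0 (p i - p j) := by
  set A := {f : Fin n → Bool | f i = true} with hA
  set B := {f : Fin n → Bool | f j = true} with hB
  have key : ∀ s t : Set (Fin n → Bool), (μ (s ∪ t)).toReal ≤ (μ s).toReal + (μ t).toReal := by
    intro s t
    rw [← ENNReal.toReal_add (measure_ne_top μ s) (measure_ne_top μ t)]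
    exact ENNReal.toReal_mono (by finiteness) (measure_union_le s t)
  have eq1 : (μ (A ∩ B)).toReal + (μ (A \ B)).toReal = p i := by
    rw [← ENNReal.toReal_add (measure_ne_top μ _) (measure_ne_top μ _),
      measure_inter_add_diff A (meas_all B)]
    exact hmarg i
  have eq2 : (μ (B ∩ A)).toReal + (μ (B \ A)).toReal = p j := by
    rw [← ENNReal.toReal_add (measure_ne_top μ _) (measure_ne_top μ _),
      measure_inter_add_diff B (meas_all A)]
    exact hmarg j
  have hsets : {f : Fin n → Bool | f i = f j}ᶜ = (A \ B) ∪ (B \ A) := by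
    ext f
    simp only [Set.mem_compl_iff, Set.mem_setOf_eq, Set.mem_union, Set.mem_diff, hA, hB,
      Set.mem_setOf_eq]
    cases h1 : f i <;> cases h2 : f j <;> simp
  have hdisj : Disjoint (A \ B) (B \ A) := disjoint_sdiff_sdiff
  have eq3 : (μ (A \ B)).toReal + (μ (B \ A)).toReal = |p i - p j| := by
    have hc := measure_add_measure_compl (μ := μ) (meas_all {f : Fin n → Bool | f i = f j})
    have hc' : (μ {f : Fin n → Bool | f i = f j}).toReal
        + (μ {f : Fin n → Bool | f i = f j}ᶜ).toReal = 1 := by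
      rw [← ENNReal.toReal_add (measure_ne_top μ _) (measure_ne_top μ _), hc]
      simp
    rw [hmax i j] at hc'
    have hu : (μ ({f : Fin n → Bool | f i = f j}ᶜ)).toReal
        = (μ (A \ B)).toReal + (μ (B \ A)).toReal := by
      rw [hsets, measure_union hdisj (meas_all _),
        ENNReal.toReal_add (measure_ne_top μ _) (measure_ne_top μ _)]
    rw [hu] at hc'
    linarith
  have hBA : 0 ≤ (μ (B \ A)).toReal := ENNReal.toReal_nonneg
  have hAB : 0 ≤ (μ (A \ B)).toReal := ENNReal.toReal_nonneg
  have hcomm : (μ (A ∩ B)).toReal = (μ (B ∩ A)).toReal := by rw [Set.inter_comm]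
  rcases abs_cases (p i - p j) with ⟨h1, h2⟩ | ⟨h1, h2⟩
  · rw [max_eq_right h2]; linarith
  · rw [max_eq_left (by linarith)]; linarith


lemma null_of_le {i j : Fin n} (hij : p i ≤ p j) :
    μ ({f : Fin n → Bool | f i = true} \ {f | f j = true}) = 0 := by
  have h := diff_toReal μ hmarg hmax i j
  rw [max_eq_left (by linarith)] at h
  exact ((ENNReal.toReal_eq_zero_iff _).mp h).resolve_right (measure_ne_top μ _)

lemma atom_toReal (hp : ∀ i, 0 ≤ p i ∧ p i ≤ 1) (x : Fin n → Bool) :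
    (μ {x}).toReal =
      max 0 ((if h : (Finset.univ.filter (fun i => x i = true)).Nonempty
                then (Finset.univ.filter (fun i => x i = true)).inf' h p else 1)
           - (if h : (Finset.univ.filter (fun i => x i = false)).Nonempty
                then (Finset.univ.filter (fun i => x i = false)).sup' h p else 0)) := by
  set S := Finset.univ.filter (fun i => x i = true) with hSdef
  set Sc := Finset.univ.filter (fun i => x i = false) with hScdef
  have hmemS : ∀ i, i ∈ S ↔ x i = true := by intro i; simp [hSdef]
  have hmemSc : ∀ i, i ∈ Sc ↔ x i = false := by intro i; simp [hScdef]
  by_cases hS : S.Nonempty <;> by_cases hSc : Sc.Nonempty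
  · -- both nonempty
    obtain ⟨i0, hi0S, hi0⟩ := S.exists_mem_eq_inf' hS p
    obtain ⟨j0, hj0S, hj0⟩ := Sc.exists_mem_eq_sup' hSc p
    have hxi0 : x i0 = true := (hmemS i0).mp hi0S
    have hxj0 : x j0 = false := (hmemSc j0).mp hj0S
    set D := ({f : Fin n → Bool | f i0 = true} \ {f | f j0 = true}) with hD
    have hsub : {x} ⊆ D := by
      rw [Set.singleton_subset_iff]
      exact ⟨hxi0, by simp [hxj0]⟩
    have hnull : μ (D \ {x}) = 0 := by
      have hsub2 : D \ {x} ⊆ ⋃ i, (if x i = true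
          then ({f : Fin n → Bool | f i0 = true} \ {f | f i = true})
          else ({f : Fin n → Bool | f i = true} \ {f | f j0 = true})) := by
        rintro f ⟨⟨hf1, hf2⟩, hfx⟩
        obtain ⟨i, hi⟩ := Function.ne_iff.mp (by simpa using hfx)
        refine Set.mem_iUnion.mpr ⟨i, ?_⟩
        by_cases hxi : x i = true
        · rw [if_pos hxi]
          have : f i ≠ true := fun h => hi (h.trans hxi.symm)
          exact ⟨hf1, by simpa using this⟩
        · rw [if_neg hxi]
          have hxif : x i = false := by simpa using hxi
          have : f i = true := by
            cases hfi : f i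
            · exact absurd (hfi.trans hxif.symm) hi
            · rfl
          exact ⟨this, by simpa using hf2⟩
      refine measure_mono_null hsub2 (measure_iUnion_null fun i => ?_)
      by_cases hxi : x i = true
      · rw [if_pos hxi]
        exact null_of_le μ hmarg hmax (hi0 ▸ Finset.inf'_le p ((hmemS i).mpr hxi))
      · rw [if_neg hxi]
        exact null_of_le μ hmarg hmax
          (hj0 ▸ Finset.le_sup' p ((hmemSc i).mpr (by simpa using hxi)))
    rw [← sandwich μ x D hsub hnull, hD, diff_toReal μ hmarg hmax, dif_pos hS, dif_pos hSc,
      hi0, hj0]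
  · -- S nonempty, Sc empty : all x i = true
    have hall : ∀ i, x i = true := by
      intro i
      by_contra h
      exact hSc ⟨i, (hmemSc i).mpr (Bool.not_eq_true _ ▸ by simpa using h)⟩
    obtain ⟨i0, hi0S, hi0⟩ := S.exists_mem_eq_inf' hS p
    set D := {f : Fin n → Bool | f i0 = true} with hD
    have hsub : {x} ⊆ D := Set.singleton_subset_iff.mpr (hall i0)
    have hnull : μ (D \ {x}) = 0 := by
      have hsub2 : D \ {x} ⊆ ⋃ i,
          ({f : Fin n → Bool | f i0 = true} \ {f | f i = true}) := by
        rintro f ⟨hf1, hfx⟩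
        obtain ⟨i, hi⟩ := Function.ne_iff.mp (by simpa using hfx)
        refine Set.mem_iUnion.mpr ⟨i, hf1, ?_⟩
        simp only [Set.mem_setOf_eq]
        exact fun h => hi (h.trans (hall i).symm)
      refine measure_mono_null hsub2 (measure_iUnion_null fun i => ?_)
      exact null_of_le μ hmarg hmax (hi0 ▸ Finset.inf'_le p ((hmemS i).mpr (hall i)))
    rw [← sandwich μ x D hsub hnull, hD, hmarg i0, dif_pos hS, dif_neg hSc, hi0]
    rw [max_eq_right (by linarith [(hp i0).1])]
    ring
  · -- S empty, Sc nonempty : all x i = false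
    have hall : ∀ i, x i = false := by
      intro i
      by_contra h
      exact hS ⟨i, (hmemS i).mpr (by simpa using h)⟩
    obtain ⟨j0, hj0S, hj0⟩ := Sc.exists_mem_eq_sup' hSc p
    set D := {f : Fin n → Bool | f j0 = true}ᶜ with hD
    have hsub : {x} ⊆ D := by
      rw [Set.singleton_subset_iff]
      simp [hD, hall j0]
    have hnull : μ (D \ {x}) = 0 := by
      have hsub2 : D \ {x} ⊆ ⋃ i,
          ({f : Fin n → Bool | f i = true} \ {f | f j0 = true}) := by
        rintro f ⟨hf1, hfx⟩
        obtain ⟨i, hi⟩ := Function.ne_iff.mp (by simpa using hfx)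
        refine Set.mem_iUnion.mpr ⟨i, ?_, hf1⟩
        simp only [Set.mem_setOf_eq]
        cases hfi : f i
        · exact absurd (hfi.trans (hall i).symm) hi
        · rfl
      refine measure_mono_null hsub2 (measure_iUnion_null fun i => ?_)
      exact null_of_le μ hmarg hmax (hj0 ▸ Finset.le_sup' p ((hmemSc i).mpr (hall i)))
    have hDval : (μ D).toReal = 1 - p j0 := by
      have hc := measure_add_measure_compl (μ := μ) (meas_all {f : Fin n → Bool | f j0 = true})
      have : (μ {f : Fin n → Bool | f j0 = true}).toReal + (μ D).toReal = 1 := by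
        rw [← ENNReal.toReal_add (measure_ne_top μ _) (measure_ne_top μ _), hD, hc]; simp
      rw [hmarg j0] at this; linarith
    rw [← sandwich μ x D hsub hnull, hDval, dif_neg hS, dif_pos hSc, hj0]
    rw [max_eq_right (by linarith [(hp j0).2])]
  · -- both empty: n = 0
    have : ∀ i : Fin n, False := by
      intro i
      cases hxi : x i
      · exact hSc ⟨i, (hmemSc i).mpr hxi⟩
      · exact hS ⟨i, (hmemS i).mpr hxi⟩
    have huniv : ({x} : Set (Fin n → Bool)) = Set.univ := by
      ext f
      simp only [Set.mem_singleton_iff, Set.mem_univ, iff_true]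
      funext i
      exact absurd trivial (fun _ => this i)
    rw [huniv, dif_neg hS, dif_neg hSc, max_eq_right (by norm_num)]
    simp

end

/-- Uniqueness of the multimaximal coupling of a finite family of Bernoulli
distributions. -/
theorem multimaximal_coupling_unique (n : ℕ) (p : Fin n → ℝ)
    (hp : ∀ i, 0 ≤ p i ∧ p i ≤ 1)
    (μ μ' : Measure (Fin n → Bool))
    (hμprob : IsProbabilityMeasure μ) (hμ'prob : IsProbabilityMeasure μ')
    (hμmarg : ∀ i, (μ {f : Fin n → Bool | f i = true}).toReal = p i)
    (hμ'marg : ∀ i, (μ' {f : Fin n → Bool | f i = true}).toReal = p i)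
    (hμmax : ∀ i j, (μ {f : Fin n → Bool | f i = f j}).toReal = 1 - |p i - p j|)
    (hμ'max : ∀ i j, (μ' {f : Fin n → Bool | f i = f j}).toReal = 1 - |p i - p j|) :
    μ = μ' := by
  refine Measure.ext_of_singleton fun x => ?_
  have h1 := atom_toReal μ hμmarg hμmax hp x
  have h2 := atom_toReal μ' hμ'marg hμ'max hp x
  exact (ENNReal.toReal_eq_toReal_iff' (measure_ne_top μ _) (measure_ne_top μ' _)).mp
    (h1.trans h2.symm)
end

section
/- Let n ≥ 1 and p : Fin n → ℝ with 0 ≤ p i ≤ 1 for every i. Then every coupling μ of the Bernoulli family p satisfies μ {f | ∀ i j, f i = f j} ≤ 1 − ((max over i of p i) − (min over i of p i)), and there exists a coupling attaining this bound. That is, the maximal probability, over all couplings, that all n variables take a common value equals 1 − (max_i p i − min_i p i). -/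
open MeasureTheory Set

/-- The maximal probability, over all couplings of a finite family of Bernoulli
distributions, that all `n` variables take a common value equals
`1 - (max_i p i - min_i p i)`. -/
theorem multimaximal_all_equal (n : ℕ) (hn : 1 ≤ n) (p : Fin n → ℝ)
    (hp : ∀ i, 0 ≤ p i ∧ p i ≤ 1) :
    (∀ μ : Measure (Fin n → Bool), IsProbabilityMeasure μ →
      (∀ i, (μ {f : Fin n → Bool | f i = true}).toReal = p i) →
      (μ {f : Fin n → Bool | ∀ i j, f i = f j}).toReal ≤ 1 - ((⨆ i, p i) - ⨅ i, p i)) ∧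
    (∃ μ : Measure (Fin n → Bool), IsProbabilityMeasure μ ∧
      (∀ i, (μ {f : Fin n → Bool | f i = true}).toReal = p i) ∧
      (μ {f : Fin n → Bool | ∀ i j, f i = f j}).toReal = 1 - ((⨆ i, p i) - ⨅ i, p i)) := by
  have hne : Nonempty (Fin n) := ⟨⟨0, hn⟩⟩
  obtain ⟨imax, himax⟩ := Finite.exists_max p
  obtain ⟨imin, himin⟩ := Finite.exists_min p
  have hM : (⨆ i, p i) = p imax :=
    le_antisymm (ciSup_le himax) (le_ciSup (Set.Finite.bddAbove (finite_range p)) imax)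
  have hm : (⨅ i, p i) = p imin :=
    le_antisymm (ciInf_le (Set.Finite.bddBelow (finite_range p)) imin) (le_ciInf himin)
  have hmM : p imin ≤ p imax := himin imax
  have meas : ∀ s : Set (Fin n → Bool), MeasurableSet s := fun s => s.toFinite.measurableSet
  rw [hM, hm]
  constructor
  · intro μ hμ hcoup
    have hsub : {f : Fin n → Bool | ∀ i j, f i = f j} ⊆
        {f | f imin = true} ∪ {f | f imax = false} := by
      intro f hf
      rcases Bool.eq_false_or_eq_true (f imax) with h | h
      · exact Or.inl ((hf imin imax).trans h)
      · exact Or.inr h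
    have h1 : μ {f : Fin n → Bool | ∀ i j, f i = f j} ≤
        μ {f | f imin = true} + μ {f | f imax = false} :=
      (measure_mono hsub).trans (measure_union_le _ _)
    have h2 : (μ {f : Fin n → Bool | f imax = false}).toReal = 1 - p imax := by
      have he : {f : Fin n → Bool | f imax = false} = {f : Fin n → Bool | f imax = true}ᶜ := by
        ext f; simp
      rw [he, prob_compl_eq_one_sub (meas _),
        ENNReal.toReal_sub_of_le (prob_le_one) (by simp), ENNReal.toReal_one, hcoup imax]
    have h3 : (μ {f : Fin n → Bool | ∀ i j, f i = f j}).toReal ≤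
        (μ {f | f imin = true}).toReal + (μ {f | f imax = false}).toReal := by
      rw [← ENNReal.toReal_add (measure_ne_top μ _) (measure_ne_top μ _)]
      exact ENNReal.toReal_mono (by finiteness) h1
    rw [hcoup imin, h2] at h3
    linarith
  · have hg : Measurable fun x : ℝ => fun i => decide (x < p i) := by
      refine measurable_pi_lambda _ fun i => ?_
      have he : (fun x : ℝ => decide (x < p i)) = fun x => if x < p i then true else false := by
        ext x; by_cases h : x < p i <;> simp [h]
      rw [he]
      exact Measurable.ite measurableSet_Iio measurable_const measurable_const
    refine ⟨(volume.restrict (Ioo (0:ℝ) 1)).map (fun x => fun i => decide (x < p i)),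
      ⟨?_⟩, ?_, ?_⟩
    · rw [Measure.map_apply hg MeasurableSet.univ, Set.preimage_univ,
        Measure.restrict_apply MeasurableSet.univ, Set.univ_inter, Real.volume_Ioo]
      norm_num
    · intro i
      rw [Measure.map_apply hg (meas _), Measure.restrict_apply (hg (meas _))]
      have he : (fun x : ℝ => fun i => decide (x < p i)) ⁻¹' {f | f i = true} ∩ Ioo 0 1
          = Ioo 0 (p i) := by
        ext x
        simp only [Set.mem_inter_iff, Set.mem_preimage, Set.mem_setOf_eq,
          decide_eq_true_eq, Set.mem_Ioo]
        constructor
        · rintro ⟨h1, h2, h3⟩; exact ⟨h2, h1⟩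
        · rintro ⟨h1, h2⟩; exact ⟨h2, h1, lt_of_lt_of_le h2 (hp i).2⟩
      rw [he, Real.volume_Ioo, sub_zero, ENNReal.toReal_ofReal (hp i).1]
    · rw [Measure.map_apply hg (meas _), Measure.restrict_apply (hg (meas _))]
      have he : (fun x : ℝ => fun i => decide (x < p i)) ⁻¹' {f | ∀ i j, f i = f j} ∩ Ioo 0 1
          = Ioo 0 (p imin) ∪ (Ioo 0 1 ∩ Ici (p imax)) := by
        ext x
        simp only [Set.mem_inter_iff, Set.mem_preimage, Set.mem_setOf_eq, Set.mem_union,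
          Set.mem_Ioo, Set.mem_Ici]
        constructor
        · rintro ⟨hall, hx0, hx1⟩
          rcases lt_or_ge x (p imin) with h | h
          · exact Or.inl ⟨hx0, h⟩
          · refine Or.inr ⟨⟨hx0, hx1⟩, ?_⟩
            by_contra hc
            push_neg at hc
            have := hall imin imax
            simp [not_lt.mpr h, hc] at this
        · rintro (⟨hx0, hxm⟩ | ⟨⟨hx0, hx1⟩, hxM⟩)
          · refine ⟨fun i j => ?_, hx0, lt_of_lt_of_le hxm ((hp imin).2)⟩
            simp [lt_of_lt_of_le hxm (himin i), lt_of_lt_of_le hxm (himin j)]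
          · refine ⟨fun i j => ?_, hx0, hx1⟩
            simp [not_lt.mpr (le_trans (himax i) hxM), not_lt.mpr (le_trans (himax j) hxM)]
      rw [he]
      have hdisj : Disjoint (Ioo 0 (p imin)) (Ioo 0 1 ∩ Ici (p imax)) := by
        refine Set.disjoint_left.mpr ?_
        rintro x ⟨_, hxm⟩ ⟨_, hxM⟩
        exact absurd (lt_of_lt_of_le hxm hmM) (not_lt.mpr hxM)
      rw [measure_union hdisj ((measurableSet_Ioo).inter measurableSet_Ici)]
      have hvol : volume (Ioo (0:ℝ) 1 ∩ Ici (p imax)) = ENNReal.ofReal (1 - p imax) := by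
        apply le_antisymm
        · calc volume (Ioo (0:ℝ) 1 ∩ Ici (p imax)) ≤ volume (Icc (p imax) 1) := by
                apply measure_mono
                rintro x ⟨⟨_, hx1⟩, hxM⟩
                exact ⟨hxM, le_of_lt hx1⟩
            _ = ENNReal.ofReal (1 - p imax) := Real.volume_Icc
        · calc ENNReal.ofReal (1 - p imax) = volume (Ioo (p imax) 1) := Real.volume_Ioo.symm
            _ ≤ volume (Ioo (0:ℝ) 1 ∩ Ici (p imax)) := by
                apply measure_mono
                rintro x ⟨hxM, hx1⟩
                exact ⟨⟨lt_of_le_of_lt (hp imax).1 hxM, hx1⟩, le_of_lt hxM⟩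
      rw [hvol, Real.volume_Ioo, sub_zero,
        ← ENNReal.ofReal_add (hp imin).1 (by linarith [(hp imax).2]),
        ENNReal.toReal_ofReal (by linarith [(hp imax).2, (hp imin).1])]
      ring
end

section
/- Let n be a natural number and p : Fin n → ℝ with 0 ≤ p i ≤ 1 for every i, and let μ be a coupling of the Bernoulli family p. Then μ is multimaximal (i.e., μ {f | f i = f j} = 1 − |p i − p j| for all i, j) if and only if for every nonempty finite subset S of Fin n, μ {f | ∀ i ∈ S, ∀ j ∈ S, f i = f j} = 1 − ((max over i ∈ S of p i) − (min over i ∈ S of p i)); the right-hand side is the maximal possible probability, over all couplings of the Bernoulli family p, that the variables indexed by S all take a common value. -/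
open MeasureTheory

namespace MMaux

lemma measSet {n : ℕ} (s : Set (Fin n → Bool)) : MeasurableSet s :=
  (Set.toFinite s).measurableSet

lemma split_marginal {n : ℕ} (μ : Measure (Fin n → Bool)) [IsProbabilityMeasure μ]
    (i j : Fin n) :
    (μ {f : Fin n → Bool | f i = true}).toReal =
      (μ {f : Fin n → Bool | f i = true ∧ f j = false}).toReal +
      (μ {f : Fin n → Bool | f i = true ∧ f j = true}).toReal := by
  rw [← ENNReal.toReal_add (measure_ne_top μ _) (measure_ne_top μ _),
      ← measure_union ?_ (measSet _)]
  · congr 2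
    ext f
    simp only [Set.mem_setOf_eq, Set.mem_union]
    cases h : f j <;> simp [h]
  · rw [Set.disjoint_left]
    rintro f ⟨h1, h2⟩ ⟨h3, h4⟩
    simp [h2] at h4

lemma eq_split {n : ℕ} (μ : Measure (Fin n → Bool)) [IsProbabilityMeasure μ]
    (i j : Fin n) :
    (μ {f : Fin n → Bool | f i = f j}).toReal =
      1 - ((μ {f : Fin n → Bool | f i = true ∧ f j = false}).toReal +
           (μ {f : Fin n → Bool | f j = true ∧ f i = false}).toReal) := by
  have hc : {f : Fin n → Bool | f i = f j}ᶜ =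
      {f : Fin n → Bool | f i = true ∧ f j = false} ∪
      {f : Fin n → Bool | f j = true ∧ f i = false} := by
    ext f
    simp only [Set.mem_compl_iff, Set.mem_setOf_eq, Set.mem_union]
    cases h1 : f i <;> cases h2 : f j <;> simp
  have hcompl := prob_compl_eq_one_sub (μ := μ) (measSet {f : Fin n → Bool | f i = f j})
  have hu : μ ({f : Fin n → Bool | f i = f j}ᶜ) =
      μ {f : Fin n → Bool | f i = true ∧ f j = false} +
      μ {f : Fin n → Bool | f j = true ∧ f i = false} := by
    rw [hc, measure_union ?_ (measSet _)]
    rw [Set.disjoint_left]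
    rintro f ⟨h1, h2⟩ ⟨h3, h4⟩
    simp [h1] at h4
  have h1 : μ {f : Fin n → Bool | f i = f j} = 1 - μ ({f : Fin n → Bool | f i = f j}ᶜ) := by
    rw [prob_compl_eq_one_sub (measSet _)]
    rw [ENNReal.sub_sub_cancel ENNReal.one_ne_top prob_le_one]
  rw [h1, hu, ENNReal.toReal_sub_of_le ?hle ENNReal.one_ne_top,
      ENNReal.toReal_add (measure_ne_top μ _) (measure_ne_top μ _)]
  · simp
  case hle =>
    rw [← hu]
    exact prob_le_one

/-- `p i - p j` equals the difference of the two "disagreement" masses. -/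
lemma marginal_diff {n : ℕ} (p : Fin n → ℝ) (μ : Measure (Fin n → Bool))
    [IsProbabilityMeasure μ]
    (hμ : ∀ i, (μ {f : Fin n → Bool | f i = true}).toReal = p i) (i j : Fin n) :
    p i - p j = (μ {f : Fin n → Bool | f i = true ∧ f j = false}).toReal -
      (μ {f : Fin n → Bool | f j = true ∧ f i = false}).toReal := by
  have h1 := split_marginal μ i j
  have h2 := split_marginal μ j i
  have hsame : {f : Fin n → Bool | f i = true ∧ f j = true} =
      {f : Fin n → Bool | f j = true ∧ f i = true} := by
    ext f; simp [and_comm]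
  rw [hμ] at h1 h2
  rw [hsame] at h1
  linarith

/-- Under multimaximality, if `p j ≤ p i` then the mass of `{f j = true, f i = false}`
vanishes. -/
lemma null_of_le {n : ℕ} (p : Fin n → ℝ) (μ : Measure (Fin n → Bool))
    [IsProbabilityMeasure μ]
    (hμ : ∀ i, (μ {f : Fin n → Bool | f i = true}).toReal = p i)
    (hmm : ∀ i j, (μ {f : Fin n → Bool | f i = f j}).toReal = 1 - |p i - p j|)
    {i j : Fin n} (hle : p j ≤ p i) :
    μ {f : Fin n → Bool | f j = true ∧ f i = false} = 0 := by
  have h1 := eq_split μ i j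
  have h2 := marginal_diff p μ hμ i j
  have h3 := hmm i j
  rw [abs_of_nonneg (by linarith)] at h3
  have hb : (μ {f : Fin n → Bool | f j = true ∧ f i = false}).toReal = 0 := by linarith
  have := measure_ne_top μ {f : Fin n → Bool | f j = true ∧ f i = false}
  exact (ENNReal.toReal_eq_zero_iff _).mp hb |>.resolve_right this

end MMaux

open MMaux

/-- A coupling of a finite family of Bernoulli distributions is multimaximal if and
only if, for every nonempty finite subset `S` of indices, the probability that all
the variables indexed by `S` take a common value is maximal, i.e. equals
`1 - (max_{i ∈ S} p i - min_{i ∈ S} p i)`. -/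
theorem multimaximal_iff_all_subsets (n : ℕ) (p : Fin n → ℝ)
    (hp : ∀ i, 0 ≤ p i ∧ p i ≤ 1)
    (μ : Measure (Fin n → Bool)) [IsProbabilityMeasure μ]
    (hμ : ∀ i, (μ {f : Fin n → Bool | f i = true}).toReal = p i) :
    (∀ i j, (μ {f : Fin n → Bool | f i = f j}).toReal = 1 - |p i - p j|) ↔
    (∀ (S : Finset (Fin n)) (hS : S.Nonempty),
      (μ {f : Fin n → Bool | ∀ i ∈ S, ∀ j ∈ S, f i = f j}).toReal =
        1 - (S.sup' hS p - S.inf' hS p)) := by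
  constructor
  · intro hmm S hS
    obtain ⟨i0, hi0mem, hi0⟩ := S.exists_mem_eq_sup' hS p
    obtain ⟨j0, hj0mem, hj0⟩ := S.exists_mem_eq_inf' hS p
    set N : Set (Fin n → Bool) :=
      ⋃ k ∈ S, ({f : Fin n → Bool | f k = true ∧ f i0 = false} ∪
        {f : Fin n → Bool | f j0 = true ∧ f k = false}) with hN
    have hNnull : μ N = 0 := by
      refine measure_biUnion_null_iff S.countable_toSet |>.mpr ?_
      intro k hk
      refine measure_union_null ?_ ?_
      · exact null_of_le p μ hμ hmm (by rw [← hi0]; exact Finset.le_sup' p hk)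
      · exact null_of_le p μ hμ hmm (by rw [← hj0]; exact Finset.inf'_le p hk)
    set E : Set (Fin n → Bool) := {f | ∀ i ∈ S, ∀ j ∈ S, f i = f j} with hE
    set D : Set (Fin n → Bool) := {f | f i0 = f j0} with hD
    have hED : E ⊆ D := fun f hf => hf i0 hi0mem j0 hj0mem
    have hDE : D ⊆ E ∪ N := by
      intro f hf
      by_cases hfN : f ∈ N
      · exact Or.inr hfN
      · left
        have hkey : ∀ k ∈ S, f k = f i0 := by
          intro k hk
          have h1 : ¬(f k = true ∧ f i0 = false) := by
            intro h; exact hfN (Set.mem_biUnion hk (Or.inl h))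
          have h2 : ¬(f j0 = true ∧ f k = false) := by
            intro h; exact hfN (Set.mem_biUnion hk (Or.inr h))
          have hfij : f i0 = f j0 := hf
          cases hi : f i0 with
          | false =>
            cases hk' : f k with
            | false => rfl
            | true => exact absurd ⟨hk', hi⟩ h1
          | true =>
            cases hk' : f k with
            | false => exact absurd ⟨by rw [← hfij, hi], hk'⟩ h2
            | true => rfl
        intro i hi j hj
        rw [hkey i hi, hkey j hj]
    have hmeas : μ E = μ D := by
      refine le_antisymm (measure_mono hED) ?_
      calc μ D ≤ μ (E ∪ N) := measure_mono hDE
        _ ≤ μ E + μ N := measure_union_le _ _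
        _ = μ E := by rw [hNnull, add_zero]
    have hfin := hmm i0 j0
    have hle : p j0 ≤ p i0 := by
      rw [← hi0, ← hj0]
      exact le_trans (Finset.inf'_le p hi0mem) (Finset.le_sup' p hi0mem)
    rw [abs_of_nonneg (by linarith)] at hfin
    show (μ E).toReal = 1 - (S.sup' hS p - S.inf' hS p)
    rw [hmeas, hi0, hj0]
    exact hfin
  · intro h i j
    by_cases hij : i = j
    · subst hij
      have : {f : Fin n → Bool | f i = f i} = Set.univ := by ext f; simp
      rw [this]
      simp [measure_univ]
    · have hS : ({i, j} : Finset (Fin n)).Nonempty := ⟨i, by simp⟩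
      have := h {i, j} hS
      have hset : {f : Fin n → Bool | ∀ a ∈ ({i, j} : Finset (Fin n)),
          ∀ b ∈ ({i, j} : Finset (Fin n)), f a = f b} = {f : Fin n → Bool | f i = f j} := by
        ext f
        simp only [Set.mem_setOf_eq, Finset.mem_insert, Finset.mem_singleton]
        constructor
        · intro hf; exact hf i (Or.inl rfl) j (Or.inr rfl)
        · intro hf a ha b hb
          rcases ha with ha | ha <;> rcases hb with hb | hb <;> subst ha <;> subst hb <;>
            simp [hf]
      rw [hset] at this
      rw [this]
      have hsup : ({i, j} : Finset (Fin n)).sup' hS p = max (p i) (p j) := by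
        simp [Finset.sup'_insert, Finset.sup'_singleton]
      have hinf : ({i, j} : Finset (Fin n)).inf' hS p = min (p i) (p j) := by
        simp [Finset.inf'_insert, Finset.inf'_singleton]
      rw [hsup, hinf, max_sub_min_eq_abs, abs_sub_comm]
end

section
/- Let n ≥ 1 and p : Fin n → ℝ with 0 ≤ p i ≤ 1 for every i, and suppose p is monotone: p i ≤ p j whenever i ≤ j. Let μ be a coupling of the Bernoulli family p. Then μ is multimaximal (i.e., μ {f | f i = f j} = 1 − |p i − p j| for all i, j) if and only if μ {f | f i = f (i+1)} = 1 − (p (i+1) − p i) for every i with i + 1 < n. (Maximality of all consecutive pairs suffices for multimaximality when the success probabilities are sorted.) -/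
open MeasureTheory

lemma bern_meas {n : ℕ} (s : Set (Fin n → Bool)) : MeasurableSet s :=
  s.to_countable.measurableSet

lemma bern_aux {n : ℕ} (μ : Measure (Fin n → Bool)) [IsProbabilityMeasure μ]
    (i j : Fin n) (pi pj : ℝ)
    (hi : (μ {f : Fin n → Bool | f i = true}).toReal = pi)
    (hj : (μ {f : Fin n → Bool | f j = true}).toReal = pj) :
    (μ {f : Fin n → Bool | f i = f j}).toReal = 1 - (pj - pi) ↔
      μ {f : Fin n → Bool | f i = true ∧ f j = false} = 0 := by
  set A : Set (Fin n → Bool) := {f | f i = true ∧ f j = false} with hA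
  set B : Set (Fin n → Bool) := {f | f i = false ∧ f j = true} with hB
  set C : Set (Fin n → Bool) := {f | f i = f j} with hC
  set TT : Set (Fin n → Bool) := {f | f i = true ∧ f j = true} with hTT
  have key : ∀ s t : Set (Fin n → Bool), Disjoint s t →
      (μ (s ∪ t)).toReal = (μ s).toReal + (μ t).toReal := by
    intro s t h
    rw [measure_union h (bern_meas t),
      ENNReal.toReal_add (measure_ne_top μ s) (measure_ne_top μ t)]
  have hdAB : Disjoint A B := by
    rw [Set.disjoint_left]; rintro f ⟨h1, h2⟩ ⟨h3, h4⟩; simp_all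
  have hdCAB : Disjoint C (A ∪ B) := by
    rw [Set.disjoint_left]
    rintro f h1 (⟨h3, h4⟩ | ⟨h3, h4⟩) <;>
      (simp only [hC, Set.mem_setOf_eq] at h1; simp_all)
  have hdTB : Disjoint TT B := by
    rw [Set.disjoint_left]; rintro f ⟨h1, h2⟩ ⟨h3, h4⟩; simp_all
  have hdTA : Disjoint TT A := by
    rw [Set.disjoint_left]; rintro f ⟨h1, h2⟩ ⟨h3, h4⟩; simp_all
  have hU : (Set.univ : Set (Fin n → Bool)) = C ∪ (A ∪ B) := by
    ext f
    simp only [Set.mem_univ, Set.mem_union, hA, hB, hC, Set.mem_setOf_eq, true_iff]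
    cases hfi : f i <;> cases hfj : f j <;> simp
  have hj' : {f : Fin n → Bool | f j = true} = TT ∪ B := by
    ext f
    simp only [Set.mem_union, hTT, hB, Set.mem_setOf_eq]
    cases hfi : f i <;> cases hfj : f j <;> simp
  have hi' : {f : Fin n → Bool | f i = true} = TT ∪ A := by
    ext f
    simp only [Set.mem_union, hTT, hA, Set.mem_setOf_eq]
    cases hfi : f i <;> cases hfj : f j <;> simp
  have e1 : pj = (μ TT).toReal + (μ B).toReal := by
    rw [← hj, hj', key _ _ hdTB]
  have e2 : pi = (μ TT).toReal + (μ A).toReal := by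
    rw [← hi, hi', key _ _ hdTA]
  have e3 : (1 : ℝ) = (μ C).toReal + ((μ A).toReal + (μ B).toReal) := by
    have : (μ Set.univ).toReal = 1 := by simp
    rw [← this, hU, key _ _ hdCAB, key _ _ hdAB]
  have ha0 : 0 ≤ (μ A).toReal := ENNReal.toReal_nonneg
  constructor
  · intro h
    have : (μ A).toReal = 0 := by linarith
    rwa [ENNReal.toReal_eq_zero_iff, or_iff_left (measure_ne_top μ A)] at this
  · intro h
    have : (μ A).toReal = 0 := by rw [h]; simp
    linarith

/-- When the success probabilities are sorted, a coupling of a finite family of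
Bernoulli distributions is multimaximal if and only if every consecutive pair
attains the maximal probability of agreement. -/
theorem multimaximal_iff_consecutive (n : ℕ) (hn : 1 ≤ n) (p : Fin n → ℝ)
    (hp : ∀ i, 0 ≤ p i ∧ p i ≤ 1) (hmono : Monotone p)
    (μ : Measure (Fin n → Bool)) [IsProbabilityMeasure μ]
    (hμ : ∀ i, (μ {f : Fin n → Bool | f i = true}).toReal = p i) :
    (∀ i j, (μ {f : Fin n → Bool | f i = f j}).toReal = 1 - |p i - p j|) ↔
    (∀ (i : Fin n) (h : (i : ℕ) + 1 < n),
      (μ {f : Fin n → Bool | f i = f ⟨(i : ℕ) + 1, h⟩}).toReal =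
        1 - (p ⟨(i : ℕ) + 1, h⟩ - p i)) := by
  constructor
  · intro H i h
    have hle : p i ≤ p ⟨(i : ℕ) + 1, h⟩ := hmono (by simp [Fin.le_def])
    rw [H i ⟨(i : ℕ) + 1, h⟩, abs_sub_comm, abs_of_nonneg (by linarith)]
  · intro hcons
    have hzero : ∀ d : ℕ, ∀ i j : Fin n, (j : ℕ) = (i : ℕ) + d →
        μ {f : Fin n → Bool | f i = true ∧ f j = false} = 0 := by
      intro d
      induction d with
      | zero =>
        intro i j h
        have hji : j = i := Fin.ext (by omega)
        subst hji
        have : {f : Fin n → Bool | f j = true ∧ f j = false} = ∅ := by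
          ext f
          constructor
          · rintro ⟨h1, h2⟩; rw [h1] at h2; exact absurd h2 (by simp)
          · intro h; exact h.elim
        rw [this]; simp
      | succ d ih =>
        intro i j h
        have hk : (i : ℕ) + d < n := by omega
        set k : Fin n := ⟨(i : ℕ) + d, hk⟩ with hkdef
        have hsub : {f : Fin n → Bool | f i = true ∧ f j = false} ⊆
            {f : Fin n → Bool | f i = true ∧ f k = false} ∪
            {f : Fin n → Bool | f k = true ∧ f j = false} := by
          rintro f ⟨h1, h2⟩
          cases hfk : f k
          · exact Or.inl ⟨h1, hfk⟩
          · exact Or.inr ⟨hfk, h2⟩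
        have h0 : μ {f : Fin n → Bool | f i = true ∧ f k = false} = 0 := ih i k rfl
        have hkv : (k : ℕ) = (i : ℕ) + d := rfl
        have hkj : (k : ℕ) + 1 < n := by
          have := j.isLt; omega
        have hje : j = ⟨(k : ℕ) + 1, hkj⟩ := Fin.ext (by show (j : ℕ) = (i : ℕ) + d + 1; omega)
        have h1 : μ {f : Fin n → Bool | f k = true ∧ f j = false} = 0 := by
          rw [hje]
          exact (bern_aux μ k ⟨(k : ℕ) + 1, hkj⟩ (p k) (p ⟨(k : ℕ) + 1, hkj⟩)
            (hμ k) (hμ _)).mp (hcons k hkj)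
        exact measure_mono_null hsub (measure_union_null h0 h1)
    have main : ∀ i j : Fin n, i ≤ j →
        (μ {f : Fin n → Bool | f i = f j}).toReal = 1 - (p j - p i) := by
      intro i j hij
      exact (bern_aux μ i j (p i) (p j) (hμ i) (hμ j)).mpr
        (hzero ((j : ℕ) - (i : ℕ)) i j (by omega))
    intro i j
    rcases le_total i j with hij | hji
    · rw [main i j hij, abs_sub_comm, abs_of_nonneg (by linarith [hmono hij])]
    · have : {f : Fin n → Bool | f i = f j} = {f : Fin n → Bool | f j = f i} := by
        ext f; simp [eq_comm]
      rw [this, main j i hji, abs_of_nonneg (by linarith [hmono hji])]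
end

section
/- Let n be a natural number and p : Fin n → ℝ with 0 ≤ p i ≤ 1 for every i. Let λ denote Lebesgue measure on ℝ restricted to the interval [0,1] (a probability measure), and define Φ : ℝ → (Fin n → Bool) by Φ u i = decide (u < p i). Then the pushforward measure Φ_* λ is a coupling of the Bernoulli family p (its i-th marginal assigns probability p i to true for each i), and it is multimaximal: (Φ_* λ) {f | f i = f j} = 1 − |p i − p j| for all i, j. -/
/-!
Feeding one uniform variable `u` into every threshold `u < p i` makes the events `{f i = true}`
nested intervals `[0, p i)`, so the marginals are right, and `f i ≠ f j` happens exactly on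
`[min (p i) (p j), max (p i) (p j))`, an interval of length `|p i - p j|`.
-/

open MeasureTheory Set

noncomputable def quantileMap {ι : Type*} (p : ι → ℝ) (u : ℝ) : ι → Bool :=
  fun i => decide (u < p i)

section QuantileMap

variable {ι : Type*} (p : ι → ℝ)

theorem quantileMap_preimage_apply_eq_true (i : ι) :
    quantileMap p ⁻¹' {f | f i = true} = Iio (p i) := by
  ext u
  simp [quantileMap]

theorem quantileMap_preimage_apply_eq_apply (i j : ι) :
    quantileMap p ⁻¹' {f | f i = f j} = (Ico (min (p i) (p j)) (max (p i) (p j)))ᶜ := by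
  ext u
  simp only [quantileMap, mem_preimage, mem_ofPred_eq, decide_eq_decide, mem_compl_iff, mem_Ico,
    min_le_iff, lt_max_iff]
  grind

theorem measurable_quantileMap : Measurable (quantileMap p) :=
  measurable_pi_lambda _ fun i => measurable_to_bool <|
    (quantileMap_preimage_apply_eq_true p i).symm ▸ measurableSet_Iio

theorem map_quantileMap_apply_eq_true (μ : Measure ℝ) (i : ι) :
    μ.map (quantileMap p) {f | f i = true} = μ (Iio (p i)) := by
  rw [Measure.map_apply (measurable_quantileMap p)
      (measurableSet_eq_fun (measurable_pi_apply i) measurable_const),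
    quantileMap_preimage_apply_eq_true]

theorem map_quantileMap_apply_eq_apply (μ : Measure ℝ) (i j : ι) :
    μ.map (quantileMap p) {f | f i = f j} = μ (Ico (min (p i) (p j)) (max (p i) (p j)))ᶜ := by
  rw [Measure.map_apply (measurable_quantileMap p)
      (measurableSet_eq_fun (measurable_pi_apply i) (measurable_pi_apply j)),
    quantileMap_preimage_apply_eq_apply]

end QuantileMap

section UnitInterval

instance isProbabilityMeasure_volume_restrict_Icc_zero_one :
    IsProbabilityMeasure (volume.restrict (Icc (0 : ℝ) 1)) :=
  ⟨by simp⟩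

theorem volume_restrict_Icc_zero_one_Iio {c : ℝ} (hc : c ≤ 1) :
    volume.restrict (Icc (0 : ℝ) 1) (Iio c) = ENNReal.ofReal c := by
  have hinter : Iio c ∩ Icc 0 1 = Ico 0 c := by
    ext u
    simp only [mem_inter_iff, mem_Iio, mem_Icc, mem_Ico]
    grind
  rw [Measure.restrict_apply measurableSet_Iio, hinter, Real.volume_Ico, sub_zero]

theorem volume_restrict_Icc_zero_one_Ico {a b : ℝ} (ha : 0 ≤ a) (hb : b ≤ 1) :
    volume.restrict (Icc (0 : ℝ) 1) (Ico a b) = ENNReal.ofReal (b - a) := by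
  have hsub : Ico a b ⊆ Icc 0 1 := fun u hu => ⟨ha.trans hu.1, hu.2.le.trans hb⟩
  rw [Measure.restrict_eq_self _ hsub, Real.volume_Ico]

end UnitInterval

theorem ENNReal.toReal_one_sub_ofReal {x : ℝ} (h₀ : 0 ≤ x) (h₁ : x ≤ 1) :
    (1 - ENNReal.ofReal x).toReal = 1 - x := by
  rw [← ENNReal.ofReal_one, ← ENNReal.ofReal_sub _ h₀, ENNReal.toReal_ofReal (by linarith)]

/-- The pushforward of Lebesgue measure on `[0,1]` along
`u ↦ (i ↦ decide (u < p i))` is a multimaximal coupling of the Bernoulli family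
`p`. -/
theorem quantile_coupling_is_multimaximal (n : ℕ) (p : Fin n → ℝ)
    (hp : ∀ i, 0 ≤ p i ∧ p i ≤ 1) :
    IsProbabilityMeasure
      ((volume.restrict (Set.Icc (0:ℝ) 1)).map (fun u i => decide (u < p i))) ∧
    (∀ i, (((volume.restrict (Set.Icc (0:ℝ) 1)).map (fun u i => decide (u < p i)))
        {f : Fin n → Bool | f i = true}).toReal = p i) ∧
    (∀ i j, (((volume.restrict (Set.Icc (0:ℝ) 1)).map (fun u i => decide (u < p i)))
        {f : Fin n → Bool | f i = f j}).toReal = 1 - |p i - p j|) := by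
  rw [show (fun u i => decide (u < p i)) = quantileMap p from rfl]
  refine ⟨Measure.isProbabilityMeasure_map (measurable_quantileMap p).aemeasurable,
    fun i => ?_, fun i j => ?_⟩
  · rw [map_quantileMap_apply_eq_true, volume_restrict_Icc_zero_one_Iio (hp i).2,
      ENNReal.toReal_ofReal (hp i).1]
  · have hmin : 0 ≤ min (p i) (p j) := le_min (hp i).1 (hp j).1
    have hmax : max (p i) (p j) ≤ 1 := max_le (hp i).2 (hp j).2
    rw [map_quantileMap_apply_eq_apply, prob_compl_eq_one_sub measurableSet_Ico,
      volume_restrict_Icc_zero_one_Ico hmin hmax,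
      ENNReal.toReal_one_sub_ofReal (sub_nonneg.2 min_le_max) (by linarith), max_sub_min_eq_abs']
end

section
/- Let α be a finite nonempty type, μ and ν probability measures on α, and D a subset of α. Then every coupling γ of μ and ν satisfies γ {z : α × α | (z.1 ∈ D ↔ z.2 ∈ D)} ≤ 1 − |μ D − ν D|, and there exists a coupling γ of μ and ν attaining equality. That is, the maximal probability, over all couplings, that two variables with distributions μ and ν agree on the dichotomization determined by D equals 1 − |μ D − ν D|. -/
open MeasureTheory ProbabilityTheory

section Aux
variable {α : Type*} [MeasurableSpace α]

private lemma mul_cond_eq' (μ : Measure α) [IsFiniteMeasure μ] {s t : Set α} (hs : MeasurableSet s)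
    (hst : μ (s ∩ t) = μ s) {c : ENNReal} (hc : c ≤ μ s) : c * (μ[t|s]) = c := by
  rw [cond_apply hs, hst]
  rcases eq_or_ne (μ s) 0 with h | h
  · have : c = 0 := le_antisymm (h ▸ hc) zero_le'
    simp [this]
  · rw [ENNReal.inv_mul_cancel h (measure_ne_top μ s), mul_one]

private lemma cond_zero_of_inter_null' (μ : Measure α) {s t : Set α} (hs : MeasurableSet s)
    (h : μ (s ∩ t) = 0) : μ[t|s] = 0 := by
  rw [cond_apply hs, h, mul_zero]

private lemma smul_cond' (μ : Measure α) [IsFiniteMeasure μ] (s : Set α) :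
    μ s • μ[|s] = μ.restrict s := by
  rw [ProbabilityTheory.cond, smul_smul]
  rcases eq_or_ne (μ s) 0 with h | h
  · simp [h, Measure.restrict_eq_zero.2 h]
  · rw [ENNReal.mul_inv_cancel h (measure_ne_top μ s), one_smul]

end Aux

private lemma exists_coupling_aux {α : Type*} [Fintype α]
    [MeasurableSpace α] [MeasurableSingletonClass α]
    (μ ν : Measure α) [IsProbabilityMeasure μ] [IsProbabilityMeasure ν] (D : Set α)
    (h : ν D ≤ μ D) :
    ∃ γ : Measure (α × α), IsProbabilityMeasure γ ∧
      γ.map Prod.fst = μ ∧ γ.map Prod.snd = ν ∧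
      (γ {z : α × α | z.1 ∈ D ↔ z.2 ∈ D}).toReal =
        1 - ((μ D).toReal - (ν D).toReal) := by
  have hD : MeasurableSet D := (Set.toFinite D).measurableSet
  have hDc : MeasurableSet Dᶜ := hD.compl
  set p := μ D with hp
  set q := ν D with hq
  have hp1 : p ≤ 1 := prob_le_one
  have hq1 : q ≤ 1 := prob_le_one
  have hμc : μ Dᶜ = 1 - p := prob_compl_eq_one_sub hD
  have hνc : ν Dᶜ = 1 - q := prob_compl_eq_one_sub hD
  set γ : Measure (α × α) :=
    q • ((μ[|D]).prod (ν[|D])) + (1 - p) • ((μ[|Dᶜ]).prod (ν[|Dᶜ]))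
      + (p - q) • ((μ[|D]).prod (ν[|Dᶜ])) with hγ
  have hfst : γ.map Prod.fst = μ := by
    rw [hγ, Measure.map_add _ _ measurable_fst, Measure.map_add _ _ measurable_fst,
      Measure.map_smul, Measure.map_smul, Measure.map_smul,
      Measure.map_fst_prod, Measure.map_fst_prod, Measure.map_fst_prod,
      smul_smul, smul_smul, smul_smul,
      mul_cond_eq' ν hD (by rw [Set.inter_univ]) le_rfl,
      mul_cond_eq' ν hDc (by rw [Set.inter_univ]) (by rw [hνc]; exact tsub_le_tsub_left h 1),
      mul_cond_eq' ν hDc (by rw [Set.inter_univ]) (by rw [hνc]; exact tsub_le_tsub_right hp1 q)]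
    have hre : q • μ[|D] + (1 - p) • μ[|Dᶜ] + (p - q) • μ[|D]
        = (q + (p - q)) • μ[|D] + (1 - p) • μ[|Dᶜ] := by
      rw [add_smul]; abel
    rw [hre, add_tsub_cancel_of_le h, ← hμc, smul_cond' μ D, smul_cond' μ Dᶜ,
      Measure.restrict_add_restrict_compl hD]
  have hsnd : γ.map Prod.snd = ν := by
    rw [hγ, Measure.map_add _ _ measurable_snd, Measure.map_add _ _ measurable_snd,
      Measure.map_smul, Measure.map_smul, Measure.map_smul,
      Measure.map_snd_prod, Measure.map_snd_prod, Measure.map_snd_prod,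
      smul_smul, smul_smul, smul_smul,
      mul_cond_eq' μ hD (by rw [Set.inter_univ]) h,
      mul_cond_eq' μ hDc (by rw [Set.inter_univ]) (le_of_eq hμc.symm),
      mul_cond_eq' μ hD (by rw [Set.inter_univ]) tsub_le_self]
    have hre : q • ν[|D] + (1 - p) • ν[|Dᶜ] + (p - q) • ν[|Dᶜ]
        = q • ν[|D] + ((1 - p) + (p - q)) • ν[|Dᶜ] := by
      rw [add_smul]; abel
    rw [hre, tsub_add_tsub_cancel hp1 h, ← hνc, smul_cond' ν D, smul_cond' ν Dᶜ,
      Measure.restrict_add_restrict_compl hD]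
  haveI hprob : IsProbabilityMeasure γ := by
    constructor
    have := congrArg (fun m : Measure α => m Set.univ) hfst
    simpa [Measure.map_apply measurable_fst MeasurableSet.univ] using this
  set A : Set (α × α) := {z : α × α | z.1 ∈ D ↔ z.2 ∈ D} with hA
  have hAm : MeasurableSet A := (Set.toFinite A).measurableSet
  have hAc : Aᶜ = (D ×ˢ Dᶜ) ∪ (Dᶜ ×ˢ D) := by
    ext z
    by_cases h1 : z.1 ∈ D <;> by_cases h2 : z.2 ∈ D <;>
      simp [hA, Set.mem_prod, h1, h2]
  have hdis : Disjoint (D ×ˢ Dᶜ) (Dᶜ ×ˢ D) := by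
    rw [Set.disjoint_left]
    rintro ⟨x, y⟩ ⟨hx, hy⟩ ⟨hx', hy'⟩
    exact hx' hx
  have h1 : ((μ[|D]).prod (ν[|D])) Aᶜ = 0 := by
    rw [hAc]
    apply measure_union_null
    · rw [Measure.prod_prod, cond_zero_of_inter_null' ν hD (by simp), mul_zero]
    · rw [Measure.prod_prod, cond_zero_of_inter_null' μ hD (by simp), zero_mul]
  have h2 : ((μ[|Dᶜ]).prod (ν[|Dᶜ])) Aᶜ = 0 := by
    rw [hAc]
    apply measure_union_null
    · rw [Measure.prod_prod, cond_zero_of_inter_null' μ hDc (by simp), zero_mul]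
    · rw [Measure.prod_prod, cond_zero_of_inter_null' ν hDc (by simp), mul_zero]
  have h3 : (p - q) * ((μ[|D]).prod (ν[|Dᶜ])) Aᶜ = p - q := by
    rw [hAc, measure_union hdis ((Set.toFinite _).measurableSet), Measure.prod_prod,
      Measure.prod_prod, cond_zero_of_inter_null' μ (t := Dᶜ) hD (by simp), zero_mul, add_zero,
      ← mul_assoc, mul_cond_eq' μ hD (by rw [Set.inter_self]) tsub_le_self,
      mul_cond_eq' ν hDc (by rw [Set.inter_self])
        (by rw [hνc]; exact tsub_le_tsub_right hp1 q)]
  have hAcval : γ Aᶜ = p - q := by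
    rw [hγ]
    simp only [Measure.coe_add, Measure.coe_smul, Pi.add_apply, Pi.smul_apply, smul_eq_mul,
      h1, h2, mul_zero, zero_add, add_zero]
    exact h3
  have hAval : γ A = 1 - (p - q) := by
    rw [← compl_compl A, prob_compl_eq_one_sub hAm.compl, hAcval]
  refine ⟨γ, hprob, hfst, hsnd, ?_⟩
  rw [hAval, ENNReal.toReal_sub_of_le (le_trans tsub_le_self hp1) ENNReal.one_ne_top,
    ENNReal.toReal_one, ENNReal.toReal_sub_of_le h (measure_ne_top μ D)]

/-- The maximal probability, over all couplings of `μ` and `ν`, that two variables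
agree on the dichotomization determined by `D` equals `1 - |μ D - ν D|`. -/
theorem maximal_coupling_dichotomization {α : Type*} [Fintype α] [Nonempty α]
    [MeasurableSpace α] [MeasurableSingletonClass α]
    (μ ν : Measure α) [IsProbabilityMeasure μ] [IsProbabilityMeasure ν] (D : Set α) :
    (∀ γ : Measure (α × α), IsProbabilityMeasure γ →
      γ.map Prod.fst = μ → γ.map Prod.snd = ν →
      (γ {z : α × α | z.1 ∈ D ↔ z.2 ∈ D}).toReal ≤
        1 - |(μ D).toReal - (ν D).toReal|) ∧
    (∃ γ : Measure (α × α), IsProbabilityMeasure γ ∧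
      γ.map Prod.fst = μ ∧ γ.map Prod.snd = ν ∧
      (γ {z : α × α | z.1 ∈ D ↔ z.2 ∈ D}).toReal =
        1 - |(μ D).toReal - (ν D).toReal|) := by
  have hD : MeasurableSet D := (Set.toFinite D).measurableSet
  constructor
  · intro γ hγ hfst hsnd
    set A : Set (α × α) := {z : α × α | z.1 ∈ D ↔ z.2 ∈ D} with hA
    have hAm : MeasurableSet A := (Set.toFinite A).measurableSet
    have hAc : Aᶜ = (D ×ˢ Dᶜ) ∪ (Dᶜ ×ˢ D) := by
      ext z
      by_cases h1 : z.1 ∈ D <;> by_cases h2 : z.2 ∈ D <;>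
        simp [hA, Set.mem_prod, h1, h2]
    have hdis : Disjoint (D ×ˢ Dᶜ) (Dᶜ ×ˢ D) := by
      rw [Set.disjoint_left]
      rintro ⟨x, y⟩ ⟨hx, hy⟩ ⟨hx', hy'⟩
      exact hx' hx
    set a := (γ (D ×ˢ D)).toReal with ha
    set b := (γ (D ×ˢ Dᶜ)).toReal with hb
    set c := (γ (Dᶜ ×ˢ D)).toReal with hc
    have hμD : (μ D).toReal = a + b := by
      have hsplit : Prod.fst ⁻¹' D = (D ×ˢ D) ∪ (D ×ˢ Dᶜ) := by
        ext z; by_cases hz : z.2 ∈ D <;> simp [Set.mem_prod, hz]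
      have hd : Disjoint (D ×ˢ D) (D ×ˢ Dᶜ) := by
        rw [Set.disjoint_left]
        rintro ⟨x, y⟩ ⟨hx, hy⟩ ⟨hx', hy'⟩
        exact hy' hy
      rw [← hfst, Measure.map_apply measurable_fst hD, hsplit,
        measure_union hd ((Set.toFinite _).measurableSet),
        ENNReal.toReal_add (measure_ne_top _ _) (measure_ne_top _ _)]
    have hνD : (ν D).toReal = a + c := by
      have hsplit : Prod.snd ⁻¹' D = (D ×ˢ D) ∪ (Dᶜ ×ˢ D) := by
        ext z; by_cases hz : z.1 ∈ D <;> simp [Set.mem_prod, hz]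
      have hd : Disjoint (D ×ˢ D) (Dᶜ ×ˢ D) := by
        rw [Set.disjoint_left]
        rintro ⟨x, y⟩ ⟨hx, hy⟩ ⟨hx', hy'⟩
        exact hx' hx
      rw [← hsnd, Measure.map_apply measurable_snd hD, hsplit,
        measure_union hd ((Set.toFinite _).measurableSet),
        ENNReal.toReal_add (measure_ne_top _ _) (measure_ne_top _ _)]
    have hAcval : (γ Aᶜ).toReal = b + c := by
      rw [hAc, measure_union hdis ((Set.toFinite _).measurableSet),
        ENNReal.toReal_add (measure_ne_top _ _) (measure_ne_top _ _)]
    have hAval : (γ A).toReal = 1 - (b + c) := by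
      rw [← compl_compl A, prob_compl_eq_one_sub hAm.compl,
        ENNReal.toReal_sub_of_le prob_le_one ENNReal.one_ne_top, ENNReal.toReal_one, hAcval]
    have hbn : 0 ≤ b := ENNReal.toReal_nonneg
    have hcn : 0 ≤ c := ENNReal.toReal_nonneg
    rw [hAval, hμD, hνD]
    have hsub : a + b - (a + c) = b - c := by ring
    rw [hsub]
    have habs : |b - c| ≤ b + c := abs_le.2 ⟨by linarith, by linarith⟩
    linarith
  · rcases le_total (ν D) (μ D) with hle | hle
    · obtain ⟨γ, h1, h2, h3, h4⟩ := exists_coupling_aux μ ν D hle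
      refine ⟨γ, h1, h2, h3, ?_⟩
      rw [h4, abs_of_nonneg (sub_nonneg.2 (ENNReal.toReal_mono (measure_ne_top μ D) hle))]
    · obtain ⟨γ, h1, h2, h3, h4⟩ := exists_coupling_aux ν μ D hle
      haveI := h1
      refine ⟨γ.map Prod.swap, Measure.isProbabilityMeasure_map measurable_swap.aemeasurable, ?_, ?_, ?_⟩
      · rw [Measure.map_map measurable_fst measurable_swap]
        exact h3
      · rw [Measure.map_map measurable_snd measurable_swap]
        exact h2
      · rw [Measure.map_apply measurable_swap
          ((Set.toFinite {z : α × α | z.1 ∈ D ↔ z.2 ∈ D}).measurableSet)]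
        have hswap : Prod.swap ⁻¹' {z : α × α | z.1 ∈ D ↔ z.2 ∈ D}
            = {z : α × α | z.1 ∈ D ↔ z.2 ∈ D} := by
          ext z; exact iff_comm
        rw [hswap, h4, abs_sub_comm,
          abs_of_nonneg (sub_nonneg.2 (ENNReal.toReal_mono (measure_ne_top ν D) hle))]
end

section
/- Let α be a finite nonempty type and let μ and ν be probability measures on α. Then the following are equivalent: (1) there exists a coupling γ of μ and ν such that for EVERY subset D ⊆ α, γ {z : α × α | (z.1 ∈ D ↔ z.2 ∈ D)} = 1 − |μ D − ν D| (i.e., a coupling that simultaneously maximizes the probability of agreement of every dichotomization); (2) μ nominally dominates ν or ν nominally dominates μ. -/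
open MeasureTheory
open scoped ENNReal

/-- `μ` nominally dominates `ν` if `μ {a} < ν {a}` holds for at most one element
`a`. -/
def NominallyDominates {α : Type*} [MeasurableSpace α] (μ ν : Measure α) : Prop :=
  {a : α | μ {a} < ν {a}}.Subsingleton

section helpers

variable {β : Type*} [Fintype β] [MeasurableSpace β] [MeasurableSingletonClass β]

private lemma meas_all_s10 (s : Set β) : MeasurableSet s := (Set.toFinite s).measurableSet

private lemma measure_eq_sum' (m : Measure β) (s : Set β) :
    m s = ∑ x, s.indicator (fun x => m {x}) x := by
  rw [← Measure.tsum_indicator_apply_singleton m s (meas_all_s10 s), tsum_fintype]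

open scoped Classical in
private lemma toReal_measure_eq_sum (m : Measure β) [IsFiniteMeasure m] (s : Set β) :
    (m s).toReal = ∑ x, if x ∈ s then (m {x}).toReal else 0 := by
  rw [measure_eq_sum' m s, ENNReal.toReal_sum (fun a _ => ?_)]
  · exact Finset.sum_congr rfl fun x _ => by by_cases h : x ∈ s <;> simp [Set.indicator_apply, h]
  · by_cases h : a ∈ s <;> simp [Set.indicator_apply, h, measure_ne_top]


end helpers

section main

variable {α : Type*} [Fintype α] [MeasurableSpace α] [MeasurableSingletonClass α]

private lemma exists_special [Nonempty α] (μ ν : Measure α) [IsProbabilityMeasure μ]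
    [IsProbabilityMeasure ν] (h : NominallyDominates μ ν) :
    ∃ a : α, (∀ x, x ≠ a → ν {x} ≤ μ {x}) ∧ μ {a} ≤ ν {a} := by
  classical
  by_cases he : ∃ x, μ {x} < ν {x}
  · obtain ⟨a, ha⟩ := he
    refine ⟨a, fun x hx => ?_, ha.le⟩
    by_contra hlt
    push_neg at hlt
    exact hx (h hlt ha)
  · push_neg at he
    have hex : ∃ a : α, μ {a} ≤ ν {a} := by
      by_contra hno
      push_neg at hno
      have hlt : ∑ x : α, (ν {x}).toReal < ∑ x : α, (μ {x}).toReal :=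
        Finset.sum_lt_sum_of_nonempty Finset.univ_nonempty fun x _ =>
          (ENNReal.toReal_lt_toReal (measure_ne_top _ _) (measure_ne_top _ _)).mpr (hno x)
      have h1 : ∑ x : α, (μ {x}).toReal = 1 := by
        have := toReal_measure_eq_sum μ Set.univ
        simpa using this.symm
      have h2 : ∑ x : α, (ν {x}).toReal = 1 := by
        have := toReal_measure_eq_sum ν Set.univ
        simpa using this.symm
      rw [h1, h2] at hlt
      exact lt_irrefl _ hlt
    obtain ⟨a, ha⟩ := hex
    exact ⟨a, fun x _ => he x, ha⟩


open scoped Classical in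
private lemma backward (μ ν : Measure α) [IsProbabilityMeasure μ] [IsProbabilityMeasure ν]
    (a : α) (ha1 : ∀ x, x ≠ a → ν {x} ≤ μ {x}) (ha2 : μ {a} ≤ ν {a}) :
    ∃ γ : Measure (α × α), IsProbabilityMeasure γ ∧
      γ.map Prod.fst = μ ∧ γ.map Prod.snd = ν ∧
      ∀ D : Set α, (γ {z : α × α | z.1 ∈ D ↔ z.2 ∈ D}).toReal =
        1 - |(μ D).toReal - (ν D).toReal| := by
  set w : α × α → ℝ≥0∞ := fun z => if z.1 = z.2 then min (μ {z.1}) (ν {z.1})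
    else if z.2 = a then μ {z.1} - ν {z.1} else 0 with hw
  have hwne : ∀ z, w z ≠ ⊤ := by
    rintro ⟨x, y⟩
    simp only [hw]
    split_ifs with h1 h2
    · exact ((min_le_left _ _).trans_lt (measure_lt_top μ _)).ne
    · exact (tsub_le_self.trans_lt (measure_lt_top μ _)).ne
    · exact ENNReal.zero_ne_top
  set γ : Measure (α × α) := Measure.sum (fun z : α × α => w z • Measure.dirac z) with hγ
  have happly : ∀ S : Set (α × α), γ S = ∑ z : α × α, if z ∈ S then w z else 0 := by
    intro S
    rw [hγ, Measure.sum_apply _ (meas_all_s10 S), tsum_fintype]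
    refine Finset.sum_congr rfl fun z _ => ?_
    rw [Measure.smul_apply, Measure.dirac_apply' _ (meas_all_s10 S), smul_eq_mul]
    by_cases h : z ∈ S <;> simp [Set.indicator_apply, h]
  have hrowsum : ∀ x, ∑ y, w (x, y) = μ {x} := by
    intro x
    by_cases hx : x = a
    · subst hx
      rw [Finset.sum_eq_single x]
      · simp only [hw]
        simp [min_eq_left ha2]
      · intro y _ hy
        simp only [hw]
        rw [if_neg (by exact fun h => hy h.symm), if_neg hy]
      · exact fun h => absurd (Finset.mem_univ x) h
    · have hzero : ∀ y ∈ Finset.univ, y ∉ ({x, a} : Finset α) → w (x, y) = 0 := by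
        intro y _ hy
        simp only [Finset.mem_insert, Finset.mem_singleton, not_or] at hy
        simp only [hw]
        rw [if_neg (fun h => hy.1 h.symm), if_neg hy.2]
      rw [← Finset.sum_subset (Finset.subset_univ ({x, a} : Finset α)) hzero,
        Finset.sum_pair hx]
      simp [hw, hx, min_eq_right (ha1 x hx), add_tsub_cancel_of_le (ha1 x hx)]
  have hcolsum : ∀ y, ∑ x, w (x, y) = ν {y} := by
    intro y
    by_cases hy : y = a
    · subst hy
      rw [← Finset.add_sum_erase Finset.univ (fun x => w (x, y)) (Finset.mem_univ y)]
      have hterm : ∀ x ∈ Finset.univ.erase y, w (x, y) = μ {x} - ν {x} := by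
        intro x hx
        have hxy : x ≠ y := Finset.ne_of_mem_erase hx
        simp [hw, hxy]
      rw [Finset.sum_congr rfl hterm]
      have hL : ν {y} + ∑ x ∈ Finset.univ.erase y, ν {x} = 1 := by
        rw [Finset.add_sum_erase Finset.univ (fun x => ν {x}) (Finset.mem_univ y)]
        have := measure_eq_sum' ν Set.univ
        simp only [Set.indicator_univ] at this
        rw [← this, measure_univ]
      have hR : (w (y, y) + ∑ x ∈ Finset.univ.erase y, (μ {x} - ν {x}))
          + ∑ x ∈ Finset.univ.erase y, ν {x} = 1 := by
        rw [add_assoc, ← Finset.sum_add_distrib]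
        have : ∀ x ∈ Finset.univ.erase y, (μ {x} - ν {x}) + ν {x} = μ {x} := by
          intro x hx
          exact tsub_add_cancel_of_le (ha1 x (Finset.ne_of_mem_erase hx))
        rw [Finset.sum_congr rfl this]
        have hwyy : w (y, y) = μ {y} := by
          simp [hw, min_eq_left ha2]
        rw [hwyy, Finset.add_sum_erase Finset.univ (fun x => μ {x}) (Finset.mem_univ y)]
        have := measure_eq_sum' μ Set.univ
        simp only [Set.indicator_univ] at this
        rw [← this, measure_univ]
      have hfin : ∑ x ∈ Finset.univ.erase y, ν {x} ≠ ⊤ := by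
        refine (lt_of_le_of_lt ?_ (measure_lt_top ν Set.univ)).ne
        rw [measure_eq_sum' ν Set.univ]
        simp only [Set.indicator_univ]
        exact Finset.sum_le_sum_of_subset (Finset.subset_univ _)
      exact WithTop.add_right_cancel hfin (hR.trans hL.symm)
    · rw [Finset.sum_eq_single y]
      · simp [hw, min_eq_right (ha1 y hy)]
      · intro x _ hx
        simp [hw, hx, hy]
      · exact fun h => absurd (Finset.mem_univ y) h
  have hμ1 : ∑ x : α, μ {x} = 1 := by
    have := measure_eq_sum' μ Set.univ
    simp only [Set.indicator_univ] at this
    rw [← this, measure_univ]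
  have hprob : IsProbabilityMeasure γ := by
    constructor
    rw [happly]
    simp only [Set.mem_univ, if_true]
    rw [Fintype.sum_prod_type]
    rw [Finset.sum_congr rfl fun x _ => hrowsum x]
    exact hμ1
  haveI := hprob
  refine ⟨γ, hprob, ?_, ?_, ?_⟩
  · refine Measure.ext_of_singleton fun x => ?_
    rw [Measure.map_apply measurable_fst (measurableSet_singleton x), happly]
    simp only [Set.mem_preimage, Set.mem_singleton_iff]
    rw [Fintype.sum_prod_type]
    rw [Finset.sum_congr rfl fun x' _ => ?_, Finset.sum_ite_eq' Finset.univ x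
      (fun x' => ∑ y, w (x', y)), if_pos (Finset.mem_univ x)]
    · exact hrowsum x
    · by_cases h : x' = x <;> simp [h]
  · refine Measure.ext_of_singleton fun y => ?_
    rw [Measure.map_apply measurable_snd (measurableSet_singleton y), happly]
    simp only [Set.mem_preimage, Set.mem_singleton_iff]
    rw [Fintype.sum_prod_type]
    rw [Finset.sum_congr rfl fun x _ => Finset.sum_ite_eq' Finset.univ y (fun y' => w (x, y'))]
    simp only [Finset.mem_univ, if_true]
    exact hcolsum y
  · intro D
    have hAgrR : (γ {z : α × α | z.1 ∈ D ↔ z.2 ∈ D}).toReal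
        + (γ ({z : α × α | z.1 ∈ D ↔ z.2 ∈ D}ᶜ)).toReal = 1 := by
      rw [← ENNReal.toReal_add (measure_ne_top _ _) (measure_ne_top _ _),
        measure_add_measure_compl (meas_all_s10 _), measure_univ, ENNReal.toReal_one]
    suffices hdis : (γ ({z : α × α | z.1 ∈ D ↔ z.2 ∈ D}ᶜ)).toReal
        = |(μ D).toReal - (ν D).toReal| by linarith
    have hmD := toReal_measure_eq_sum μ D
    have hnD := toReal_measure_eq_sum ν D
    have hm1 : ∑ x : α, (μ {x}).toReal = 1 := by
      have := toReal_measure_eq_sum μ Set.univ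
      simpa using this.symm
    have hn1 : ∑ x : α, (ν {x}).toReal = 1 := by
      have := toReal_measure_eq_sum ν Set.univ
      simpa using this.symm
    have hsplitm : (∑ x : α, if x ∈ D then (μ {x}).toReal else 0)
        + (∑ x : α, if x ∈ D then 0 else (μ {x}).toReal) = 1 := by
      rw [← Finset.sum_add_distrib, ← hm1]
      exact Finset.sum_congr rfl fun x _ => by by_cases h : x ∈ D <;> simp [h]
    have hsplitn : (∑ x : α, if x ∈ D then (ν {x}).toReal else 0)
        + (∑ x : α, if x ∈ D then 0 else (ν {x}).toReal) = 1 := by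
      rw [← Finset.sum_add_distrib, ← hn1]
      exact Finset.sum_congr rfl fun x _ => by by_cases h : x ∈ D <;> simp [h]
    by_cases haD : a ∈ D
    · have hval : γ ({z : α × α | z.1 ∈ D ↔ z.2 ∈ D}ᶜ)
          = ∑ x : α, if x ∈ D then 0 else (μ {x} - ν {x}) := by
        rw [happly, Fintype.sum_prod_type]
        refine Finset.sum_congr rfl fun x _ => ?_
        by_cases hx : x ∈ D
        · rw [if_pos hx]
          refine Finset.sum_eq_zero fun y _ => ?_
          by_cases hy : y ∈ D
          · rw [if_neg (by simp [hx, hy])]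
          · rw [if_pos (by simp [hx, hy]), hw]
            have h1 : x ≠ y := fun h => hy (h ▸ hx)
            have h2 : y ≠ a := fun h => hy (h ▸ haD)
            simp [h1, h2]
        · rw [if_neg hx, Finset.sum_eq_single a]
          · rw [if_pos (by simp [hx, haD]), hw]
            have h1 : x ≠ a := fun h => hx (h ▸ haD)
            simp [h1]
          · intro y _ hy
            by_cases hyD : y ∈ D
            · rw [if_pos (by simp [hx, hyD]), hw]
              have h1 : x ≠ y := fun h => hx (h ▸ hyD)
              simp [h1, hy]
            · rw [if_neg (by simp [hx, hyD])]
          · exact fun h => absurd (Finset.mem_univ a) h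
      have hvalR : (γ ({z : α × α | z.1 ∈ D ↔ z.2 ∈ D}ᶜ)).toReal
          = ∑ x : α, if x ∈ D then 0 else ((μ {x}).toReal - (ν {x}).toReal) := by
        rw [hval, ENNReal.toReal_sum (fun x _ => ?_)]
        · refine Finset.sum_congr rfl fun x _ => ?_
          by_cases hx : x ∈ D
          · simp [hx]
          · rw [if_neg hx, if_neg hx,
              ENNReal.toReal_sub_of_le (ha1 x (fun h => hx (h ▸ haD))) (measure_ne_top _ _)]
        · by_cases hx : x ∈ D
          · simp [hx]
          · rw [if_neg hx]
            exact (tsub_le_self.trans_lt (measure_lt_top μ _)).ne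
      have hsub : (∑ x : α, if x ∈ D then 0 else ((μ {x}).toReal - (ν {x}).toReal))
          = (∑ x : α, if x ∈ D then 0 else (μ {x}).toReal)
            - (∑ x : α, if x ∈ D then 0 else (ν {x}).toReal) := by
        rw [← Finset.sum_sub_distrib]
        exact Finset.sum_congr rfl fun x _ => by by_cases h : x ∈ D <;> simp [h]
      have hle : (∑ x : α, if x ∈ D then 0 else (ν {x}).toReal)
          ≤ ∑ x : α, if x ∈ D then 0 else (μ {x}).toReal := by
        refine Finset.sum_le_sum fun x _ => ?_
        by_cases hx : x ∈ D
        · simp [hx]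
        · rw [if_neg hx, if_neg hx]
          exact ENNReal.toReal_mono (measure_ne_top _ _) (ha1 x (fun h => hx (h ▸ haD)))
      rw [hvalR, hsub, hmD, hnD, abs_of_nonpos (by linarith)]
      linarith
    · have hval : γ ({z : α × α | z.1 ∈ D ↔ z.2 ∈ D}ᶜ)
          = ∑ x : α, if x ∈ D then (μ {x} - ν {x}) else 0 := by
        rw [happly, Fintype.sum_prod_type]
        refine Finset.sum_congr rfl fun x _ => ?_
        by_cases hx : x ∈ D
        · rw [if_pos hx, Finset.sum_eq_single a]
          · rw [if_pos (by simp [hx, haD]), hw]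
            have h1 : x ≠ a := fun h => haD (h ▸ hx)
            simp [h1]
          · intro y _ hy
            by_cases hyD : y ∈ D
            · rw [if_neg (by simp [hx, hyD])]
            · rw [if_pos (by simp [hx, hyD]), hw]
              have h1 : x ≠ y := fun h => hyD (h ▸ hx)
              simp [h1, hy]
          · exact fun h => absurd (Finset.mem_univ a) h
        · rw [if_neg hx]
          refine Finset.sum_eq_zero fun y _ => ?_
          by_cases hyD : y ∈ D
          · rw [if_pos (by simp [hx, hyD]), hw]
            have h1 : x ≠ y := fun h => hx (h ▸ hyD)
            have h2 : y ≠ a := fun h => haD (h ▸ hyD)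
            simp [h1, h2]
          · rw [if_neg (by simp [hx, hyD])]
      have hvalR : (γ ({z : α × α | z.1 ∈ D ↔ z.2 ∈ D}ᶜ)).toReal
          = ∑ x : α, if x ∈ D then ((μ {x}).toReal - (ν {x}).toReal) else 0 := by
        rw [hval, ENNReal.toReal_sum (fun x _ => ?_)]
        · refine Finset.sum_congr rfl fun x _ => ?_
          by_cases hx : x ∈ D
          · rw [if_pos hx, if_pos hx,
              ENNReal.toReal_sub_of_le (ha1 x (fun h => haD (h ▸ hx))) (measure_ne_top _ _)]
          · simp [hx]
        · by_cases hx : x ∈ D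
          · rw [if_pos hx]
            exact (tsub_le_self.trans_lt (measure_lt_top μ _)).ne
          · simp [hx]
      have hsub : (∑ x : α, if x ∈ D then ((μ {x}).toReal - (ν {x}).toReal) else 0)
          = (∑ x : α, if x ∈ D then (μ {x}).toReal else 0)
            - (∑ x : α, if x ∈ D then (ν {x}).toReal else 0) := by
        rw [← Finset.sum_sub_distrib]
        exact Finset.sum_congr rfl fun x _ => by by_cases h : x ∈ D <;> simp [h]
      have hle : (∑ x : α, if x ∈ D then (ν {x}).toReal else 0)
          ≤ ∑ x : α, if x ∈ D then (μ {x}).toReal else 0 := by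
        refine Finset.sum_le_sum fun x _ => ?_
        by_cases hx : x ∈ D
        · rw [if_pos hx, if_pos hx]
          exact ENNReal.toReal_mono (measure_ne_top _ _) (ha1 x (fun h => haD (h ▸ hx)))
        · simp [hx]
      rw [hvalR, hsub, hmD, hnD, abs_of_nonneg (by linarith)]

private lemma measp_all (s : Set α) : MeasurableSet s := (Set.toFinite s).measurableSet

private lemma forward (μ ν : Measure α) [IsProbabilityMeasure μ] [IsProbabilityMeasure ν]
    (γ : Measure (α × α)) [IsProbabilityMeasure γ]
    (hfst : γ.map Prod.fst = μ) (hsnd : γ.map Prod.snd = ν)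
    (hD : ∀ D : Set α, (γ {z : α × α | z.1 ∈ D ↔ z.2 ∈ D}).toReal =
        1 - |(μ D).toReal - (ν D).toReal|) :
    NominallyDominates μ ν ∨ NominallyDominates ν μ := by
  classical
  by_contra hcon
  push_neg at hcon
  obtain ⟨h1, h2⟩ := hcon
  rw [NominallyDominates, Set.not_subsingleton_iff] at h1 h2
  obtain ⟨a, ha, b, hb, hab⟩ := h1
  obtain ⟨c, hc, d, hd, hcd⟩ := h2
  simp only [Set.mem_setOf_eq] at ha hb hc hd
  -- ha : μ {a} < ν {a}, hb : μ {b} < ν {b}, hc : ν {c} < μ {c}, hd : ν {d} < μ {d}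
  have haR : (μ {a}).toReal < (ν {a}).toReal :=
    (ENNReal.toReal_lt_toReal (measure_ne_top _ _) (measure_ne_top _ _)).mpr ha
  have hbR : (μ {b}).toReal < (ν {b}).toReal :=
    (ENNReal.toReal_lt_toReal (measure_ne_top _ _) (measure_ne_top _ _)).mpr hb
  have hcR : (ν {c}).toReal < (μ {c}).toReal :=
    (ENNReal.toReal_lt_toReal (measure_ne_top _ _) (measure_ne_top _ _)).mpr hc
  have hdR : (ν {d}).toReal < (μ {d}).toReal :=
    (ENNReal.toReal_lt_toReal (measure_ne_top _ _) (measure_ne_top _ _)).mpr hd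
  have hca : c ≠ a := by rintro rfl; exact absurd ha (not_lt.mpr hc.le)
  have hcb : c ≠ b := by rintro rfl; exact absurd hb (not_lt.mpr hc.le)
  have hda : d ≠ a := by rintro rfl; exact absurd ha (not_lt.mpr hd.le)
  have hdb : d ≠ b := by rintro rfl; exact absurd hb (not_lt.mpr hd.le)
  have hrow0 : ∀ x : α, γ ({x} ×ˢ (Set.univ : Set α)) = μ {x} := by
    intro x
    rw [← hfst, Measure.map_apply measurable_fst (measp_all _)]
    congr 1
    ext z
    simp only [Set.mem_preimage, Set.mem_singleton_iff, Set.mem_prod, Set.mem_univ, and_true]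
  have hcol0 : ∀ y : α, γ ((Set.univ : Set α) ×ˢ {y}) = ν {y} := by
    intro y
    rw [← hsnd, Measure.map_apply measurable_snd (measp_all _)]
    congr 1
    ext z
    simp only [Set.mem_preimage, Set.mem_singleton_iff, Set.mem_prod, Set.mem_univ, true_and]
  have hrowR : ∀ (x : α) (S : Set α),
      (γ ({x} ×ˢ S)).toReal + (γ ({x} ×ˢ Sᶜ)).toReal = (μ {x}).toReal := by
    intro x S
    rw [← ENNReal.toReal_add (measure_ne_top _ _) (measure_ne_top _ _),
      ← measure_union ?_ ((Set.toFinite _).measurableSet), ← Set.prod_union,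
      Set.union_compl_self, hrow0]
    rw [Set.disjoint_left]
    rintro ⟨z1, z2⟩ hz1 hz2
    exact hz2.2 hz1.2
  have hcolR : ∀ (y : α) (S : Set α),
      (γ (S ×ˢ {y})).toReal + (γ (Sᶜ ×ˢ {y})).toReal = (ν {y}).toReal := by
    intro y S
    rw [← ENNReal.toReal_add (measure_ne_top _ _) (measure_ne_top _ _),
      ← measure_union ?_ ((Set.toFinite _).measurableSet), ← Set.union_prod,
      Set.union_compl_self, hcol0]
    rw [Set.disjoint_left]
    rintro ⟨z1, z2⟩ hz1 hz2
    exact hz2.1 hz1.1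
  have hdisR : ∀ D : Set α,
      (γ (D ×ˢ Dᶜ)).toReal + (γ (Dᶜ ×ˢ D)).toReal = |(μ D).toReal - (ν D).toReal| := by
    intro D
    have hdj : Disjoint (D ×ˢ Dᶜ) (Dᶜ ×ˢ D) := by
      rw [Set.disjoint_left]
      rintro ⟨z1, z2⟩ hz1 hz2
      exact hz2.1 hz1.1
    have hset : (D ×ˢ Dᶜ) ∪ (Dᶜ ×ˢ D) = {z : α × α | z.1 ∈ D ↔ z.2 ∈ D}ᶜ := by
      ext ⟨z1, z2⟩
      by_cases h1 : z1 ∈ D <;> by_cases h2 : z2 ∈ D <;>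
        simp [Set.mem_prod, h1, h2]
    have hcompl : (γ ({z : α × α | z.1 ∈ D ↔ z.2 ∈ D}ᶜ)).toReal
        = |(μ D).toReal - (ν D).toReal| := by
      rw [prob_compl_eq_one_sub ((Set.toFinite _).measurableSet),
        ENNReal.toReal_sub_of_le prob_le_one ENNReal.one_ne_top, ENNReal.toReal_one, hD D]
      ring
    rw [← ENNReal.toReal_add (measure_ne_top _ _) (measure_ne_top _ _),
      ← measure_union hdj ((Set.toFinite _).measurableSet), hset, hcompl]
  have hsingle : ∀ x y : α, ({x} ×ˢ ({y} : Set α)) = ({(x, y)} : Set (α × α)) :=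
    fun x y => Set.singleton_prod_singleton
  -- diagonal entries
  have hdiag : ∀ x : α, (μ {x}).toReal + (ν {x}).toReal - 2 * (γ {((x : α), x)}).toReal
      = |(μ {x}).toReal - (ν {x}).toReal| := by
    intro x
    have h1 := hrowR x {x}
    have h2 := hcolR x {x}
    have h3 := hdisR {x}
    rw [hsingle] at h1 h2
    linarith
  have hFcc : (γ {((c : α), c)}).toReal = (ν {c}).toReal := by
    have := hdiag c
    rw [abs_of_nonneg (by linarith)] at this
    linarith
  have hFaa : (γ {((a : α), a)}).toReal = (μ {a}).toReal := by
    have := hdiag a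
    rw [abs_of_nonpos (by linarith)] at this
    linarith
  -- key inequality
  have key : ∀ u v : α, u ≠ v →
      (ν {u}).toReal < (μ {u}).toReal → (μ {v}).toReal < (ν {v}).toReal →
      min ((μ {u}).toReal - (ν {u}).toReal) ((ν {v}).toReal - (μ {v}).toReal)
        ≤ (γ {((u : α), v)}).toReal := by
    intro u v huv hu hv
    have hvu : v ≠ u := huv.symm
    have hd' := hdisR {v, u}
    have hms : (μ ({v, u} : Set α)).toReal = (μ {v}).toReal + (μ {u}).toReal := by
      rw [show ({v, u} : Set α) = {v} ∪ {u} from (Set.singleton_union).symm,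
        measure_union (Set.disjoint_singleton.mpr hvu) ((Set.toFinite _).measurableSet),
        ENNReal.toReal_add (measure_ne_top _ _) (measure_ne_top _ _)]
    have hns : (ν ({v, u} : Set α)).toReal = (ν {v}).toReal + (ν {u}).toReal := by
      rw [show ({v, u} : Set α) = {v} ∪ {u} from (Set.singleton_union).symm,
        measure_union (Set.disjoint_singleton.mpr hvu) ((Set.toFinite _).measurableSet),
        ENNReal.toReal_add (measure_ne_top _ _) (measure_ne_top _ _)]
    have hr := hrowR u {v, u}
    have hru : (γ ({u} ×ˢ ({v, u} : Set α))).toReal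
        = (γ {((u : α), v)}).toReal + (γ {((u : α), u)}).toReal := by
      have hs : ({u} ×ˢ ({v, u} : Set α)) = ({((u : α), v)} : Set (α × α)) ∪ {((u : α), u)} := by
        ext ⟨z1, z2⟩
        simp only [Set.mem_prod, Set.mem_singleton_iff, Set.mem_insert_iff, Set.mem_union,
          Prod.mk.injEq]
        tauto
      rw [hs, measure_union (Set.disjoint_singleton.mpr (by simp [Prod.ext_iff, hvu]))
        ((Set.toFinite _).measurableSet),
        ENNReal.toReal_add (measure_ne_top _ _) (measure_ne_top _ _)]
    have huu : (γ {((u : α), u)}).toReal ≤ (ν {u}).toReal := by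
      refine ENNReal.toReal_mono (measure_ne_top _ _) ?_
      rw [← hcol0 u]
      refine measure_mono ?_
      rintro z hz
      rw [Set.mem_singleton_iff] at hz
      subst hz
      exact ⟨Set.mem_univ _, rfl⟩
    have hvv : (γ {((v : α), v)}).toReal ≤ (μ {v}).toReal := by
      refine ENNReal.toReal_mono (measure_ne_top _ _) ?_
      rw [← hrow0 v]
      refine measure_mono ?_
      rintro z hz
      rw [Set.mem_singleton_iff] at hz
      subst hz
      exact ⟨rfl, Set.mem_univ _⟩
    have hcv := hcolR v {v, u}
    have hcvu : (γ (({v, u} : Set α) ×ˢ {v})).toReal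
        = (γ {((v : α), v)}).toReal + (γ {((u : α), v)}).toReal := by
      have hs : (({v, u} : Set α) ×ˢ {v}) = ({((v : α), v)} : Set (α × α)) ∪ {((u : α), v)} := by
        ext ⟨z1, z2⟩
        simp only [Set.mem_prod, Set.mem_singleton_iff, Set.mem_insert_iff, Set.mem_union,
          Prod.mk.injEq]
        tauto
      rw [hs, measure_union (Set.disjoint_singleton.mpr (by simp [Prod.ext_iff, hvu]))
        ((Set.toFinite _).measurableSet),
        ENNReal.toReal_add (measure_ne_top _ _) (measure_ne_top _ _)]
    have hm1 : (γ ({u} ×ˢ ({v, u} : Set α)ᶜ)).toReal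
        ≤ (γ (({v, u} : Set α) ×ˢ ({v, u} : Set α)ᶜ)).toReal :=
      ENNReal.toReal_mono (measure_ne_top _ _)
        (measure_mono (Set.prod_mono_left (by simp)))
    have hm2 : (γ (({v, u} : Set α)ᶜ ×ˢ {v})).toReal
        ≤ (γ (({v, u} : Set α)ᶜ ×ˢ ({v, u} : Set α))).toReal :=
      ENNReal.toReal_mono (measure_ne_top _ _)
        (measure_mono (Set.prod_mono_right (by simp)))
    have habs : |(μ ({v, u} : Set α)).toReal - (ν ({v, u} : Set α)).toReal|
        = |((μ {u}).toReal - (ν {u}).toReal) - ((ν {v}).toReal - (μ {v}).toReal)| := by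
      rw [hms, hns]
      congr 1
      ring
    rw [habs] at hd'
    rcases le_total ((μ {u}).toReal - (ν {u}).toReal) ((ν {v}).toReal - (μ {v}).toReal)
      with h | h
    · rw [min_eq_left h]
      rw [abs_of_nonpos (by linarith)] at hd'
      linarith
    · rw [min_eq_right h]
      rw [abs_of_nonneg (by linarith)] at hd'
      linarith
  -- budget constraints
  have hrowc := hrowR c {a, b}
  have hsplitc : (γ ({c} ×ˢ ({a, b} : Set α))).toReal
      = (γ {((c : α), a)}).toReal + (γ {((c : α), b)}).toReal := by
    have hs : ({c} ×ˢ ({a, b} : Set α)) = ({((c : α), a)} : Set (α × α)) ∪ {((c : α), b)} := by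
      ext ⟨z1, z2⟩
      simp only [Set.mem_prod, Set.mem_singleton_iff, Set.mem_insert_iff, Set.mem_union,
        Prod.mk.injEq]
      tauto
    rw [hs, measure_union (Set.disjoint_singleton.mpr (by simp [Prod.ext_iff, hab]))
      ((Set.toFinite _).measurableSet),
      ENNReal.toReal_add (measure_ne_top _ _) (measure_ne_top _ _)]
  have hccle : (γ {((c : α), c)}).toReal ≤ (γ ({c} ×ˢ ({a, b} : Set α)ᶜ)).toReal := by
    refine ENNReal.toReal_mono (measure_ne_top _ _) (measure_mono ?_)
    rintro z hz
    rw [Set.mem_singleton_iff] at hz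
    subst hz
    exact ⟨rfl, by simp [hca, hcb]⟩
  have hcola := hcolR a {c, d}
  have hsplita : (γ (({c, d} : Set α) ×ˢ {a})).toReal
      = (γ {((c : α), a)}).toReal + (γ {((d : α), a)}).toReal := by
    have hs : (({c, d} : Set α) ×ˢ {a}) = ({((c : α), a)} : Set (α × α)) ∪ {((d : α), a)} := by
      ext ⟨z1, z2⟩
      simp only [Set.mem_prod, Set.mem_singleton_iff, Set.mem_insert_iff, Set.mem_union,
        Prod.mk.injEq]
      tauto
    rw [hs, measure_union (Set.disjoint_singleton.mpr (by simp [Prod.ext_iff, hcd]))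
      ((Set.toFinite _).measurableSet),
      ENNReal.toReal_add (measure_ne_top _ _) (measure_ne_top _ _)]
  have haale : (γ {((a : α), a)}).toReal ≤ (γ (({c, d} : Set α)ᶜ ×ˢ {a})).toReal := by
    refine ENNReal.toReal_mono (measure_ne_top _ _) (measure_mono ?_)
    rintro z hz
    rw [Set.mem_singleton_iff] at hz
    subst hz
    refine ⟨?_, rfl⟩
    simp only [Set.mem_compl_iff, Set.mem_insert_iff, Set.mem_singleton_iff]
    rintro (h | h)
    exacts [hca h.symm, hda h.symm]
  have k1 := key c a hca hcR haR
  have k2 := key c b hcb hcR hbR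
  have k3 := key d a hda hdR haR
  have hpos2 : 0 < min ((μ {c}).toReal - (ν {c}).toReal) ((ν {b}).toReal - (μ {b}).toReal) :=
    lt_min (by linarith) (by linarith)
  have hpos3 : 0 < min ((μ {d}).toReal - (ν {d}).toReal) ((ν {a}).toReal - (μ {a}).toReal) :=
    lt_min (by linarith) (by linarith)
  rcases le_total ((μ {c}).toReal - (ν {c}).toReal) ((ν {a}).toReal - (μ {a}).toReal) with h | h
  · rw [min_eq_left h] at k1
    linarith [k2, hpos2, hrowc, hsplitc, hccle, hFcc]
  · rw [min_eq_right h] at k1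
    linarith [k3, hpos3, hcola, hsplita, haale, hFaa]


end main

/-- There exists a coupling of `μ` and `ν` simultaneously maximizing the probability
of agreement of every dichotomization if and only if one of `μ`, `ν` nominally
dominates the other. -/
theorem simultaneous_maximal_coupling_iff_nominal_dominance
    {α : Type*} [Fintype α] [Nonempty α]
    [MeasurableSpace α] [MeasurableSingletonClass α]
    (μ ν : Measure α) [IsProbabilityMeasure μ] [IsProbabilityMeasure ν] :
    (∃ γ : Measure (α × α), IsProbabilityMeasure γ ∧
      γ.map Prod.fst = μ ∧ γ.map Prod.snd = ν ∧
      ∀ D : Set α, (γ {z : α × α | z.1 ∈ D ↔ z.2 ∈ D}).toReal =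
        1 - |(μ D).toReal - (ν D).toReal|)
    ↔ (NominallyDominates μ ν ∨ NominallyDominates ν μ) := by
  constructor
  · rintro ⟨γ, hγ, hfst, hsnd, hprop⟩
    haveI := hγ
    exact forward μ ν γ hfst hsnd hprop
  · rintro (h | h)
    · obtain ⟨a, ha1, ha2⟩ := exists_special μ ν h
      exact backward μ ν a ha1 ha2
    · obtain ⟨a, ha1, ha2⟩ := exists_special ν μ h
      obtain ⟨γ, hγ, h1, h2, h3⟩ := backward ν μ a ha1 ha2
      haveI := hγ
      refine ⟨γ.map Prod.swap, Measure.isProbabilityMeasure_map measurable_swap.aemeasurable, ?_, ?_, ?_⟩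
      · rw [Measure.map_map measurable_fst measurable_swap]
        exact h2
      · rw [Measure.map_map measurable_snd measurable_swap]
        exact h1
      · intro D
        rw [Measure.map_apply measurable_swap ((Set.toFinite _).measurableSet)]
        have hset : Prod.swap ⁻¹' {z : α × α | z.1 ∈ D ↔ z.2 ∈ D}
            = {z : α × α | z.1 ∈ D ↔ z.2 ∈ D} := by
          ext z
          simp only [Set.mem_preimage, Set.mem_setOf_eq, Prod.fst_swap, Prod.snd_swap]
          tauto
        rw [hset, h3 D, abs_sub_comm]
end

section
/- Let a finite system of categorical random variables be given (contexts C, contents Q, relation ≺, value types α_q, within-context measures μ_c), and for q ≺ c let m(q,c) denote the marginal distribution on α_q of coordinate q under μ_c. Suppose there exist a content q and contexts c, c' with q ≺ c and q ≺ c' such that neither m(q,c) nominally dominates m(q,c') nor m(q,c') nominally dominates m(q,c). Then the dichotomization of the system is contextual, i.e., there exists no coupling S of the dichotomized system such that for all contents (q,D) and all contexts c, c' with q ≺ c and q ≺ c', S {g | g ((q,D), c) = g ((q,D), c')} = 1 − |m(q,c) D − m(q,c') D|. -/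
open MeasureTheory

set_option maxHeartbeats 2000000 in
/-- Nominal dominance theorem (Dzhafarov, Cervantes, & Kujala, 2017): if in a finite
system of categorical random variables there are a content `q₀` and contexts
`c₀, c₀'` such that neither of the two marginal distributions of `q₀` in `c₀` and
`c₀'` nominally dominates the other, then the system of all dichotomizations is
contextual, i.e., it has no coupling in which every pair of content-sharing
dichotomized variables attains the maximal probability of agreement. -/
theorem nominal_dominance_violation_implies_contextuality
    {C Q : Type*} [Fintype C] [Fintype Q]
    (rel : Q → C → Prop) [∀ q c, Decidable (rel q c)]
    (α : Q → Type*) [∀ q, Fintype (α q)] [∀ q, Nonempty (α q)]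
    [∀ q, MeasurableSpace (α q)] [∀ q, MeasurableSingletonClass (α q)]
    (μ : ∀ c : C, Measure (∀ q : {q : Q // rel q c}, α q.1))
    (hμ : ∀ c, IsProbabilityMeasure (μ c))
    (q₀ : Q) (c₀ c₀' : C) (h₀ : rel q₀ c₀) (h₀' : rel q₀ c₀')
    (hdom : ¬ {a : α q₀ |
        (μ c₀).map (fun x => x ⟨q₀, h₀⟩) {a} < (μ c₀').map (fun x => x ⟨q₀, h₀'⟩) {a}}.Subsingleton)
    (hdom' : ¬ {a : α q₀ |
        (μ c₀').map (fun x => x ⟨q₀, h₀'⟩) {a} < (μ c₀).map (fun x => x ⟨q₀, h₀⟩) {a}}.Subsingleton) :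
    ¬ ∃ S : Measure ({x : (Σ q : Q, Set (α q)) × C // rel x.1.1 x.2} → Bool),
        IsProbabilityMeasure S ∧
        (∀ c : C,
          S.map (fun g (qd : {qd : Σ q : Q, Set (α q) // rel qd.1 c}) =>
              g ⟨(qd.1, c), qd.2⟩) =
            (μ c).map (fun x (qd : {qd : Σ q : Q, Set (α q) // rel qd.1 c}) =>
              @decide (x ⟨qd.1.1, qd.2⟩ ∈ qd.1.2) (Classical.propDecidable _))) ∧
        (∀ (q : Q) (D : Set (α q)) (c c' : C) (h : rel q c) (h' : rel q c'),
          (S {g | g ⟨(⟨q, D⟩, c), h⟩ = g ⟨(⟨q, D⟩, c'), h'⟩}).toReal =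
            1 - |((μ c).map (fun x => x ⟨q, h⟩) D).toReal -
                  ((μ c').map (fun x => x ⟨q, h'⟩) D).toReal|) := by
  rintro ⟨S, hP, hmarg, hagree⟩
  haveI := hP
  haveI := hμ c₀
  haveI := hμ c₀'
  haveI hpm1 : IsProbabilityMeasure ((μ c₀).map (fun x => x ⟨q₀, h₀⟩)) :=
    Measure.isProbabilityMeasure_map (measurable_pi_apply _).aemeasurable
  haveI hpm2 : IsProbabilityMeasure ((μ c₀').map (fun x => x ⟨q₀, h₀'⟩)) :=
    Measure.isProbabilityMeasure_map (measurable_pi_apply _).aemeasurable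
  -- basic transfer lemmas
  have hdichm : ∀ c : C, Measurable (fun (x : ∀ q : {q : Q // rel q c}, α q.1)
      (qd : {qd : Σ q : Q, Set (α q) // rel qd.1 c}) =>
      @decide (x ⟨qd.1.1, qd.2⟩ ∈ qd.1.2) (Classical.propDecidable _)) := by
    intro c
    refine measurable_pi_lambda _ (fun qd => ?_)
    exact Measurable.comp
      (g := fun b : α qd.1.1 => @decide (b ∈ qd.1.2) (Classical.propDecidable _))
      (f := fun x : ∀ q : {q : Q // rel q c}, α q.1 => x ⟨qd.1.1, qd.2⟩)
      Measurable.of_discrete (measurable_pi_apply _)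
  have hctx : ∀ (c : C) (E : Set ({qd : Σ q : Q, Set (α q) // rel qd.1 c} → Bool)),
      S ((fun g (qd : {qd : Σ q : Q, Set (α q) // rel qd.1 c}) => g ⟨(qd.1, c), qd.2⟩) ⁻¹' E) =
      μ c ((fun x (qd : {qd : Σ q : Q, Set (α q) // rel qd.1 c}) =>
          @decide (x ⟨qd.1.1, qd.2⟩ ∈ qd.1.2) (Classical.propDecidable _)) ⁻¹' E) := by
    intro c E
    rw [← Measure.map_apply Measurable.of_discrete MeasurableSet.of_discrete, hmarg c,
      Measure.map_apply (hdichm c) MeasurableSet.of_discrete]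
  have hone : ∀ (c : C) (hc : rel q₀ c) (D : Set (α q₀)),
      S {g | g ⟨(⟨q₀, D⟩, c), hc⟩ = true} = (μ c).map (fun x => x ⟨q₀, hc⟩) D := by
    intro c hc D
    have h : S {g | g ⟨(⟨q₀, D⟩, c), hc⟩ = true} =
        μ c ((fun x (qd : {qd : Σ q : Q, Set (α q) // rel qd.1 c}) =>
          @decide (x ⟨qd.1.1, qd.2⟩ ∈ qd.1.2) (Classical.propDecidable _)) ⁻¹'
          {f | f ⟨⟨q₀, D⟩, hc⟩ = true}) := hctx c {f | f ⟨⟨q₀, D⟩, hc⟩ = true}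
    rw [Measure.map_apply (measurable_pi_apply _) MeasurableSet.of_discrete, h]
    congr 1
    ext x
    simp only [Set.mem_preimage, Set.mem_setOf_eq, decide_eq_true_eq]
  have hnull : ∀ (c : C) (hc : rel q₀ c) (D₁ D₂ D₃ : Set (α q₀)) (t₁ t₂ t₃ : Bool),
      (∀ y : α q₀, ¬((y ∈ D₁ ↔ t₁ = true) ∧ (y ∈ D₂ ↔ t₂ = true) ∧ (y ∈ D₃ ↔ t₃ = true))) →
      S {g | g ⟨(⟨q₀, D₁⟩, c), hc⟩ = t₁ ∧ g ⟨(⟨q₀, D₂⟩, c), hc⟩ = t₂ ∧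
             g ⟨(⟨q₀, D₃⟩, c), hc⟩ = t₃} = 0 := by
    intro c hc D₁ D₂ D₃ t₁ t₂ t₃ hempty
    have h : S {g | g ⟨(⟨q₀, D₁⟩, c), hc⟩ = t₁ ∧ g ⟨(⟨q₀, D₂⟩, c), hc⟩ = t₂ ∧
             g ⟨(⟨q₀, D₃⟩, c), hc⟩ = t₃} =
        μ c ((fun x (qd : {qd : Σ q : Q, Set (α q) // rel qd.1 c}) =>
          @decide (x ⟨qd.1.1, qd.2⟩ ∈ qd.1.2) (Classical.propDecidable _)) ⁻¹'
          {f | f ⟨⟨q₀, D₁⟩, hc⟩ = t₁ ∧ f ⟨⟨q₀, D₂⟩, hc⟩ = t₂ ∧ f ⟨⟨q₀, D₃⟩, hc⟩ = t₃}) :=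
      hctx c {f | f ⟨⟨q₀, D₁⟩, hc⟩ = t₁ ∧ f ⟨⟨q₀, D₂⟩, hc⟩ = t₂ ∧ f ⟨⟨q₀, D₃⟩, hc⟩ = t₃}
    rw [h]
    have he : ((fun (x : ∀ q : {q : Q // rel q c}, α q.1)
          (qd : {qd : Σ q : Q, Set (α q) // rel qd.1 c}) =>
          @decide (x ⟨qd.1.1, qd.2⟩ ∈ qd.1.2) (Classical.propDecidable _)) ⁻¹'
          {f | f ⟨⟨q₀, D₁⟩, hc⟩ = t₁ ∧ f ⟨⟨q₀, D₂⟩, hc⟩ = t₂ ∧ f ⟨⟨q₀, D₃⟩, hc⟩ = t₃}) = ∅ := by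
      ext x
      simp only [Set.mem_preimage, Set.mem_setOf_eq, Set.mem_empty_iff_false, iff_false]
      rintro ⟨e₁, e₂, e₃⟩
      refine hempty (x ⟨q₀, hc⟩) ⟨?_, ?_, ?_⟩
      · cases t₁
        · simp only [Bool.false_eq_true, iff_false]
          exact @of_decide_eq_false _ (Classical.propDecidable _) e₁
        · simp only [iff_true]; exact @of_decide_eq_true _ (Classical.propDecidable _) e₁
      · cases t₂
        · simp only [Bool.false_eq_true, iff_false]
          exact @of_decide_eq_false _ (Classical.propDecidable _) e₂
        · simp only [iff_true]; exact @of_decide_eq_true _ (Classical.propDecidable _) e₂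
      · cases t₃
        · simp only [Bool.false_eq_true, iff_false]
          exact @of_decide_eq_false _ (Classical.propDecidable _) e₃
        · simp only [iff_true]; exact @of_decide_eq_true _ (Classical.propDecidable _) e₃
    rw [he, measure_empty]
  -- specific null events
  have n3 : ∀ (c : C) (hc : rel q₀ c) (u v : α q₀), u ≠ v →
      S {g | g ⟨(⟨q₀, ({u} : Set (α q₀))⟩, c), hc⟩ = true ∧
             g ⟨(⟨q₀, ({v} : Set (α q₀))⟩, c), hc⟩ = true} = 0 := by
    intro c hc u v huv
    refine measure_mono_null ?_ (hnull c hc {u} {v} {v} true true true ?_)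
    · intro g hg
      exact ⟨hg.1, hg.2, hg.2⟩
    · intro y hy
      simp only [Set.mem_singleton_iff, iff_true] at hy
      obtain ⟨rfl, rfl, -⟩ := hy
      exact huv rfl
  have nB : ∀ (c : C) (hc : rel q₀ c) (v : α q₀) (D : Set (α q₀)), v ∈ D →
      S {g | g ⟨(⟨q₀, ({v} : Set (α q₀))⟩, c), hc⟩ = true ∧
             g ⟨(⟨q₀, D⟩, c), hc⟩ = false} = 0 := by
    intro c hc v D hvD
    refine measure_mono_null ?_ (hnull c hc {v} D D true false false ?_)
    · intro g hg
      exact ⟨hg.1, hg.2, hg.2⟩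
    · intro y hy
      simp only [Set.mem_singleton_iff, iff_true, Bool.false_eq_true, iff_false] at hy
      obtain ⟨rfl, h, -⟩ := hy
      exact h hvD
  have nC : ∀ (c : C) (hc : rel q₀ c) (D : Set (α q₀)) (u v : α q₀),
      (∀ y, y ∈ D → y = u ∨ y = v) →
      S {g | g ⟨(⟨q₀, D⟩, c), hc⟩ = true ∧
             g ⟨(⟨q₀, ({u} : Set (α q₀))⟩, c), hc⟩ = false ∧
             g ⟨(⟨q₀, ({v} : Set (α q₀))⟩, c), hc⟩ = false} = 0 := by
    intro c hc D u v hD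
    refine hnull c hc D {u} {v} true false false ?_
    intro y hy
    simp only [Set.mem_singleton_iff, iff_true, Bool.false_eq_true, iff_false] at hy
    obtain ⟨h1, h2, h3⟩ := hy
    rcases hD y h1 with rfl | rfl
    · exact h2 rfl
    · exact h3 rfl
  -- key: maximal agreement forces a one-sided coupling, and determines the difference
  have hkey : ∀ D : Set (α q₀),
      ((S {g | g ⟨(⟨q₀, D⟩, c₀), h₀⟩ = true ∧ g ⟨(⟨q₀, D⟩, c₀'), h₀'⟩ = false} = 0) ∨
       (S {g | g ⟨(⟨q₀, D⟩, c₀), h₀⟩ = false ∧ g ⟨(⟨q₀, D⟩, c₀'), h₀'⟩ = true} = 0)) ∧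
      (S {g | g ⟨(⟨q₀, D⟩, c₀), h₀⟩ = true ∧ g ⟨(⟨q₀, D⟩, c₀'), h₀'⟩ = false}).toReal -
        (S {g | g ⟨(⟨q₀, D⟩, c₀), h₀⟩ = false ∧ g ⟨(⟨q₀, D⟩, c₀'), h₀'⟩ = true}).toReal =
        ((μ c₀).map (fun x => x ⟨q₀, h₀⟩) D).toReal -
        ((μ c₀').map (fun x => x ⟨q₀, h₀'⟩) D).toReal := by
    intro D
    set i₁ : {x : (Σ q : Q, Set (α q)) × C // rel x.1.1 x.2} := ⟨(⟨q₀, D⟩, c₀), h₀⟩ with hi₁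
    set i₂ : {x : (Σ q : Q, Set (α q)) × C // rel x.1.1 x.2} := ⟨(⟨q₀, D⟩, c₀'), h₀'⟩ with hi₂
    have e1 : S {g | g i₁ = true} =
        S {g | g i₁ = true ∧ g i₂ = true} + S {g | g i₁ = true ∧ g i₂ = false} := by
      rw [← measure_union (Set.disjoint_left.mpr (fun {g} hg hg' =>
        Bool.noConfusion (hg.2.symm.trans hg'.2))) MeasurableSet.of_discrete]
      congr 1
      ext g
      simp only [Set.mem_setOf_eq, Set.mem_union]
      cases h2 : g i₂ <;> simp [h2]
    have e2 : S {g | g i₂ = true} =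
        S {g | g i₁ = true ∧ g i₂ = true} + S {g | g i₁ = false ∧ g i₂ = true} := by
      rw [← measure_union (Set.disjoint_left.mpr (fun {g} hg hg' =>
        Bool.noConfusion (hg.1.symm.trans hg'.1))) MeasurableSet.of_discrete]
      congr 1
      ext g
      simp only [Set.mem_setOf_eq, Set.mem_union]
      cases h1 : g i₁ <;> simp [h1]
    have e3 : S {g | g i₁ = g i₂} +
        (S {g | g i₁ = true ∧ g i₂ = false} + S {g | g i₁ = false ∧ g i₂ = true}) = 1 := by
      rw [← measure_union (Set.disjoint_left.mpr (fun {g} hg hg' =>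
        Bool.noConfusion (hg.1.symm.trans hg'.1))) MeasurableSet.of_discrete]
      have hsu : {g : {x : (Σ q : Q, Set (α q)) × C // rel x.1.1 x.2} → Bool |
            g i₁ = true ∧ g i₂ = false} ∪ {g | g i₁ = false ∧ g i₂ = true} =
          {g | g i₁ = g i₂}ᶜ := by
        ext g
        simp only [Set.mem_union, Set.mem_compl_iff, Set.mem_setOf_eq]
        cases h1 : g i₁ <;> cases h2 : g i₂ <;> simp [h1, h2]
      rw [hsu, measure_add_measure_compl MeasurableSet.of_discrete, measure_univ]
    have f1 : (S {g | g i₁ = true}).toReal =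
        (S {g | g i₁ = true ∧ g i₂ = true}).toReal +
        (S {g | g i₁ = true ∧ g i₂ = false}).toReal := by
      rw [e1, ENNReal.toReal_add (measure_ne_top _ _) (measure_ne_top _ _)]
    have f2 : (S {g | g i₂ = true}).toReal =
        (S {g | g i₁ = true ∧ g i₂ = true}).toReal +
        (S {g | g i₁ = false ∧ g i₂ = true}).toReal := by
      rw [e2, ENNReal.toReal_add (measure_ne_top _ _) (measure_ne_top _ _)]
    have f3 : (S {g | g i₁ = g i₂}).toReal +
        ((S {g | g i₁ = true ∧ g i₂ = false}).toReal +
         (S {g | g i₁ = false ∧ g i₂ = true}).toReal) = 1 := by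
      have h := congrArg ENNReal.toReal e3
      rwa [ENNReal.toReal_add (measure_ne_top _ _)
          (ENNReal.add_ne_top.mpr ⟨measure_ne_top _ _, measure_ne_top _ _⟩),
        ENNReal.toReal_add (measure_ne_top _ _) (measure_ne_top _ _),
        ENNReal.toReal_one] at h
    have f4 : (S {g | g i₁ = true}).toReal =
        ((μ c₀).map (fun x => x ⟨q₀, h₀⟩) D).toReal := by
      rw [hi₁, hone c₀ h₀ D]
    have f5 : (S {g | g i₂ = true}).toReal =
        ((μ c₀').map (fun x => x ⟨q₀, h₀'⟩) D).toReal := by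
      rw [hi₂, hone c₀' h₀' D]
    have hag := hagree q₀ D c₀ c₀' h₀ h₀'
    rw [← hi₁, ← hi₂] at hag
    constructor
    · rcases abs_cases (((μ c₀).map (fun x => x ⟨q₀, h₀⟩) D).toReal -
          ((μ c₀').map (fun x => x ⟨q₀, h₀'⟩) D).toReal) with ⟨hab, -⟩ | ⟨hab, -⟩
      · right
        have hY : (S {g | g i₁ = false ∧ g i₂ = true}).toReal = 0 := by linarith
        rcases (ENNReal.toReal_eq_zero_iff _).mp hY with h | h
        · exact h
        · exact absurd h (measure_ne_top _ _)
      · left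
        have hX : (S {g | g i₁ = true ∧ g i₂ = false}).toReal = 0 := by linarith
        rcases (ENNReal.toReal_eq_zero_iff _).mp hX with h | h
        · exact h
        · exact absurd h (measure_ne_top _ _)
    · linarith
  -- value of the one-sided disagreement events
  have hE1 : ∀ v : α q₀,
      (μ c₀').map (fun x => x ⟨q₀, h₀'⟩) {v} < (μ c₀).map (fun x => x ⟨q₀, h₀⟩) {v} →
      (S {g | g ⟨(⟨q₀, ({v} : Set (α q₀))⟩, c₀), h₀⟩ = true ∧
              g ⟨(⟨q₀, ({v} : Set (α q₀))⟩, c₀'), h₀'⟩ = false}).toReal =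
        ((μ c₀).map (fun x => x ⟨q₀, h₀⟩) {v}).toReal -
        ((μ c₀').map (fun x => x ⟨q₀, h₀'⟩) {v}).toReal := by
    intro v hv
    obtain ⟨hd, hval⟩ := hkey {v}
    have hpq : ((μ c₀').map (fun x => x ⟨q₀, h₀'⟩) {v}).toReal <
        ((μ c₀).map (fun x => x ⟨q₀, h₀⟩) {v}).toReal :=
      (ENNReal.toReal_lt_toReal (measure_ne_top _ _) (measure_ne_top _ _)).mpr hv
    rcases hd with h | h
    · exfalso
      rw [h, ENNReal.toReal_zero] at hval
      have := ENNReal.toReal_nonneg (a := S {g | g ⟨(⟨q₀, ({v} : Set (α q₀))⟩, c₀), h₀⟩ = false ∧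
              g ⟨(⟨q₀, ({v} : Set (α q₀))⟩, c₀'), h₀'⟩ = true})
      linarith
    · rw [h, ENNReal.toReal_zero] at hval
      linarith
  have hE2 : ∀ u : α q₀,
      (μ c₀).map (fun x => x ⟨q₀, h₀⟩) {u} < (μ c₀').map (fun x => x ⟨q₀, h₀'⟩) {u} →
      (S {g | g ⟨(⟨q₀, ({u} : Set (α q₀))⟩, c₀), h₀⟩ = false ∧
              g ⟨(⟨q₀, ({u} : Set (α q₀))⟩, c₀'), h₀'⟩ = true}).toReal =
        ((μ c₀').map (fun x => x ⟨q₀, h₀'⟩) {u}).toReal -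
        ((μ c₀).map (fun x => x ⟨q₀, h₀⟩) {u}).toReal := by
    intro u hu
    obtain ⟨hd, hval⟩ := hkey {u}
    have hpq : ((μ c₀).map (fun x => x ⟨q₀, h₀⟩) {u}).toReal <
        ((μ c₀').map (fun x => x ⟨q₀, h₀'⟩) {u}).toReal :=
      (ENNReal.toReal_lt_toReal (measure_ne_top _ _) (measure_ne_top _ _)).mpr hu
    rcases hd with h | h
    · rw [h, ENNReal.toReal_zero] at hval
      linarith
    · exfalso
      rw [h, ENNReal.toReal_zero] at hval
      have := ENNReal.toReal_nonneg (a := S {g | g ⟨(⟨q₀, ({u} : Set (α q₀))⟩, c₀), h₀⟩ = true ∧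
              g ⟨(⟨q₀, ({u} : Set (α q₀))⟩, c₀'), h₀'⟩ = false})
      linarith
  -- the dichotomy for the pair event
  have hdich : ∀ u v : α q₀, u ≠ v →
      (μ c₀).map (fun x => x ⟨q₀, h₀⟩) {u} < (μ c₀').map (fun x => x ⟨q₀, h₀'⟩) {u} →
      (μ c₀').map (fun x => x ⟨q₀, h₀'⟩) {v} < (μ c₀).map (fun x => x ⟨q₀, h₀⟩) {v} →
      ((S {g | g ⟨(⟨q₀, ({v} : Set (α q₀))⟩, c₀), h₀⟩ = true ∧
            g ⟨(⟨q₀, ({u} : Set (α q₀))⟩, c₀'), h₀'⟩ = true}).toReal =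
        ((μ c₀).map (fun x => x ⟨q₀, h₀⟩) {v}).toReal -
        ((μ c₀').map (fun x => x ⟨q₀, h₀'⟩) {v}).toReal) ∨
      ((S {g | g ⟨(⟨q₀, ({v} : Set (α q₀))⟩, c₀), h₀⟩ = true ∧
            g ⟨(⟨q₀, ({u} : Set (α q₀))⟩, c₀'), h₀'⟩ = true}).toReal =
        ((μ c₀').map (fun x => x ⟨q₀, h₀'⟩) {u}).toReal -
        ((μ c₀).map (fun x => x ⟨q₀, h₀⟩) {u}).toReal) := by
    intro u v huv hu hv
    have hvD : v ∈ ({u, v} : Set (α q₀)) := by simp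
    have huD : u ∈ ({u, v} : Set (α q₀)) := by simp
    have hDuv : ∀ y, y ∈ ({u, v} : Set (α q₀)) → y = v ∨ y = u := by
      intro y hy; rcases hy with h | h
      · exact Or.inr h
      · exact Or.inl h
    have hDuv' : ∀ y, y ∈ ({u, v} : Set (α q₀)) → y = u ∨ y = v := by
      intro y hy; rcases hy with h | h
      · exact Or.inl h
      · exact Or.inr h
    rcases (hkey {u, v}).1 with hc1 | hc2
    · left
      apply le_antisymm
      · rw [← hE1 v hv]
        refine ENNReal.toReal_mono (measure_ne_top _ _) ?_
        calc S {g | g ⟨(⟨q₀, ({v} : Set (α q₀))⟩, c₀), h₀⟩ = true ∧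
                g ⟨(⟨q₀, ({u} : Set (α q₀))⟩, c₀'), h₀'⟩ = true} ≤
            S ({g | g ⟨(⟨q₀, ({v} : Set (α q₀))⟩, c₀), h₀⟩ = true ∧
                g ⟨(⟨q₀, ({v} : Set (α q₀))⟩, c₀'), h₀'⟩ = false} ∪
              {g | g ⟨(⟨q₀, ({u} : Set (α q₀))⟩, c₀'), h₀'⟩ = true ∧
                g ⟨(⟨q₀, ({v} : Set (α q₀))⟩, c₀'), h₀'⟩ = true}) := by
              refine measure_mono ?_
              rintro g ⟨h1, h2⟩
              rcases Bool.eq_false_or_eq_true (g ⟨(⟨q₀, ({v} : Set (α q₀))⟩, c₀'), h₀'⟩) with h | h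
              · exact Or.inr ⟨h2, h⟩
              · exact Or.inl ⟨h1, h⟩
          _ ≤ S {g | g ⟨(⟨q₀, ({v} : Set (α q₀))⟩, c₀), h₀⟩ = true ∧
                g ⟨(⟨q₀, ({v} : Set (α q₀))⟩, c₀'), h₀'⟩ = false} + 0 := by
              rw [← n3 c₀' h₀' u v huv]
              exact measure_union_le _ _
          _ = _ := add_zero _
      · rw [← hE1 v hv]
        refine ENNReal.toReal_mono (measure_ne_top _ _) ?_
        calc S {g | g ⟨(⟨q₀, ({v} : Set (α q₀))⟩, c₀), h₀⟩ = true ∧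
                g ⟨(⟨q₀, ({v} : Set (α q₀))⟩, c₀'), h₀'⟩ = false} ≤
            S ({g | g ⟨(⟨q₀, ({v} : Set (α q₀))⟩, c₀), h₀⟩ = true ∧
                  g ⟨(⟨q₀, ({u} : Set (α q₀))⟩, c₀'), h₀'⟩ = true} ∪
              ({g | g ⟨(⟨q₀, ({v} : Set (α q₀))⟩, c₀), h₀⟩ = true ∧
                  g ⟨(⟨q₀, ({u, v} : Set (α q₀))⟩, c₀), h₀⟩ = false} ∪
               ({g | g ⟨(⟨q₀, ({u, v} : Set (α q₀))⟩, c₀), h₀⟩ = true ∧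
                  g ⟨(⟨q₀, ({u, v} : Set (α q₀))⟩, c₀'), h₀'⟩ = false} ∪
                {g | g ⟨(⟨q₀, ({u, v} : Set (α q₀))⟩, c₀'), h₀'⟩ = true ∧
                  g ⟨(⟨q₀, ({v} : Set (α q₀))⟩, c₀'), h₀'⟩ = false ∧
                  g ⟨(⟨q₀, ({u} : Set (α q₀))⟩, c₀'), h₀'⟩ = false}))) := by
              refine measure_mono ?_
              rintro g ⟨h1, h2⟩
              rcases Bool.eq_false_or_eq_true (g ⟨(⟨q₀, ({u, v} : Set (α q₀))⟩, c₀), h₀⟩) with hXD | hXD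
              case inr => exact Or.inr (Or.inl ⟨h1, hXD⟩)
              rcases Bool.eq_false_or_eq_true (g ⟨(⟨q₀, ({u, v} : Set (α q₀))⟩, c₀'), h₀'⟩) with hYD | hYD
              case inr => exact Or.inr (Or.inr (Or.inl ⟨hXD, hYD⟩))
              rcases Bool.eq_false_or_eq_true (g ⟨(⟨q₀, ({u} : Set (α q₀))⟩, c₀'), h₀'⟩) with hYu | hYu
              · exact Or.inl ⟨h1, hYu⟩
              · exact Or.inr (Or.inr (Or.inr ⟨hYD, h2, hYu⟩))
          _ ≤ S {g | g ⟨(⟨q₀, ({v} : Set (α q₀))⟩, c₀), h₀⟩ = true ∧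
                  g ⟨(⟨q₀, ({u} : Set (α q₀))⟩, c₀'), h₀'⟩ = true} +
              S ({g | g ⟨(⟨q₀, ({v} : Set (α q₀))⟩, c₀), h₀⟩ = true ∧
                  g ⟨(⟨q₀, ({u, v} : Set (α q₀))⟩, c₀), h₀⟩ = false} ∪
               ({g | g ⟨(⟨q₀, ({u, v} : Set (α q₀))⟩, c₀), h₀⟩ = true ∧
                  g ⟨(⟨q₀, ({u, v} : Set (α q₀))⟩, c₀'), h₀'⟩ = false} ∪
                {g | g ⟨(⟨q₀, ({u, v} : Set (α q₀))⟩, c₀'), h₀'⟩ = true ∧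
                  g ⟨(⟨q₀, ({v} : Set (α q₀))⟩, c₀'), h₀'⟩ = false ∧
                  g ⟨(⟨q₀, ({u} : Set (α q₀))⟩, c₀'), h₀'⟩ = false})) := measure_union_le _ _
          _ = S {g | g ⟨(⟨q₀, ({v} : Set (α q₀))⟩, c₀), h₀⟩ = true ∧
                  g ⟨(⟨q₀, ({u} : Set (α q₀))⟩, c₀'), h₀'⟩ = true} := by
              rw [measure_union_null (nB c₀ h₀ v {u, v} hvD)
                 (measure_union_null hc1 (nC c₀' h₀' {u, v} v u hDuv)), add_zero]
    · right
      apply le_antisymm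
      · rw [← hE2 u hu]
        refine ENNReal.toReal_mono (measure_ne_top _ _) ?_
        calc S {g | g ⟨(⟨q₀, ({v} : Set (α q₀))⟩, c₀), h₀⟩ = true ∧
                g ⟨(⟨q₀, ({u} : Set (α q₀))⟩, c₀'), h₀'⟩ = true} ≤
            S ({g | g ⟨(⟨q₀, ({u} : Set (α q₀))⟩, c₀), h₀⟩ = false ∧
                g ⟨(⟨q₀, ({u} : Set (α q₀))⟩, c₀'), h₀'⟩ = true} ∪
              {g | g ⟨(⟨q₀, ({u} : Set (α q₀))⟩, c₀), h₀⟩ = true ∧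
                g ⟨(⟨q₀, ({v} : Set (α q₀))⟩, c₀), h₀⟩ = true}) := by
              refine measure_mono ?_
              rintro g ⟨h1, h2⟩
              rcases Bool.eq_false_or_eq_true (g ⟨(⟨q₀, ({u} : Set (α q₀))⟩, c₀), h₀⟩) with h | h
              · exact Or.inr ⟨h, h1⟩
              · exact Or.inl ⟨h, h2⟩
          _ ≤ S {g | g ⟨(⟨q₀, ({u} : Set (α q₀))⟩, c₀), h₀⟩ = false ∧
                g ⟨(⟨q₀, ({u} : Set (α q₀))⟩, c₀'), h₀'⟩ = true} + 0 := by
              rw [← n3 c₀ h₀ u v huv]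
              exact measure_union_le _ _
          _ = _ := add_zero _
      · rw [← hE2 u hu]
        refine ENNReal.toReal_mono (measure_ne_top _ _) ?_
        calc S {g | g ⟨(⟨q₀, ({u} : Set (α q₀))⟩, c₀), h₀⟩ = false ∧
                g ⟨(⟨q₀, ({u} : Set (α q₀))⟩, c₀'), h₀'⟩ = true} ≤
            S ({g | g ⟨(⟨q₀, ({v} : Set (α q₀))⟩, c₀), h₀⟩ = true ∧
                  g ⟨(⟨q₀, ({u} : Set (α q₀))⟩, c₀'), h₀'⟩ = true} ∪
              ({g | g ⟨(⟨q₀, ({u} : Set (α q₀))⟩, c₀'), h₀'⟩ = true ∧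
                  g ⟨(⟨q₀, ({u, v} : Set (α q₀))⟩, c₀'), h₀'⟩ = false} ∪
               ({g | g ⟨(⟨q₀, ({u, v} : Set (α q₀))⟩, c₀), h₀⟩ = false ∧
                  g ⟨(⟨q₀, ({u, v} : Set (α q₀))⟩, c₀'), h₀'⟩ = true} ∪
                {g | g ⟨(⟨q₀, ({u, v} : Set (α q₀))⟩, c₀), h₀⟩ = true ∧
                  g ⟨(⟨q₀, ({u} : Set (α q₀))⟩, c₀), h₀⟩ = false ∧
                  g ⟨(⟨q₀, ({v} : Set (α q₀))⟩, c₀), h₀⟩ = false}))) := by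
              refine measure_mono ?_
              rintro g ⟨h1, h2⟩
              rcases Bool.eq_false_or_eq_true (g ⟨(⟨q₀, ({u, v} : Set (α q₀))⟩, c₀'), h₀'⟩) with hYD | hYD
              case inr => exact Or.inr (Or.inl ⟨h2, hYD⟩)
              rcases Bool.eq_false_or_eq_true (g ⟨(⟨q₀, ({u, v} : Set (α q₀))⟩, c₀), h₀⟩) with hXD | hXD
              case inr => exact Or.inr (Or.inr (Or.inl ⟨hXD, hYD⟩))
              rcases Bool.eq_false_or_eq_true (g ⟨(⟨q₀, ({v} : Set (α q₀))⟩, c₀), h₀⟩) with hXv | hXv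
              · exact Or.inl ⟨hXv, h2⟩
              · exact Or.inr (Or.inr (Or.inr ⟨hXD, h1, hXv⟩))
          _ ≤ S {g | g ⟨(⟨q₀, ({v} : Set (α q₀))⟩, c₀), h₀⟩ = true ∧
                  g ⟨(⟨q₀, ({u} : Set (α q₀))⟩, c₀'), h₀'⟩ = true} +
              S ({g | g ⟨(⟨q₀, ({u} : Set (α q₀))⟩, c₀'), h₀'⟩ = true ∧
                  g ⟨(⟨q₀, ({u, v} : Set (α q₀))⟩, c₀'), h₀'⟩ = false} ∪
               ({g | g ⟨(⟨q₀, ({u, v} : Set (α q₀))⟩, c₀), h₀⟩ = false ∧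
                  g ⟨(⟨q₀, ({u, v} : Set (α q₀))⟩, c₀'), h₀'⟩ = true} ∪
                {g | g ⟨(⟨q₀, ({u, v} : Set (α q₀))⟩, c₀), h₀⟩ = true ∧
                  g ⟨(⟨q₀, ({u} : Set (α q₀))⟩, c₀), h₀⟩ = false ∧
                  g ⟨(⟨q₀, ({v} : Set (α q₀))⟩, c₀), h₀⟩ = false})) := measure_union_le _ _
          _ = S {g | g ⟨(⟨q₀, ({v} : Set (α q₀))⟩, c₀), h₀⟩ = true ∧
                  g ⟨(⟨q₀, ({u} : Set (α q₀))⟩, c₀'), h₀'⟩ = true} := by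
              rw [measure_union_null (nB c₀' h₀' u {u, v} huD)
                 (measure_union_null hc2 (nC c₀ h₀ {u, v} u v hDuv')), add_zero]
  -- column bound
  have hcol : ∀ u u' v : α q₀, u ≠ u' → u ≠ v → u' ≠ v →
      (μ c₀').map (fun x => x ⟨q₀, h₀'⟩) {v} < (μ c₀).map (fun x => x ⟨q₀, h₀⟩) {v} →
      (S {g | g ⟨(⟨q₀, ({v} : Set (α q₀))⟩, c₀), h₀⟩ = true ∧
            g ⟨(⟨q₀, ({u} : Set (α q₀))⟩, c₀'), h₀'⟩ = true}).toReal +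
      (S {g | g ⟨(⟨q₀, ({v} : Set (α q₀))⟩, c₀), h₀⟩ = true ∧
            g ⟨(⟨q₀, ({u'} : Set (α q₀))⟩, c₀'), h₀'⟩ = true}).toReal ≤
      ((μ c₀).map (fun x => x ⟨q₀, h₀⟩) {v}).toReal -
      ((μ c₀').map (fun x => x ⟨q₀, h₀'⟩) {v}).toReal := by
    intro u u' v huu' huv hu'v hv
    have hsum : S {g | g ⟨(⟨q₀, ({v} : Set (α q₀))⟩, c₀), h₀⟩ = true ∧
            g ⟨(⟨q₀, ({u} : Set (α q₀))⟩, c₀'), h₀'⟩ = true} +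
        S {g | g ⟨(⟨q₀, ({v} : Set (α q₀))⟩, c₀), h₀⟩ = true ∧
            g ⟨(⟨q₀, ({u'} : Set (α q₀))⟩, c₀'), h₀'⟩ = true} ≤
        S {g | g ⟨(⟨q₀, ({v} : Set (α q₀))⟩, c₀), h₀⟩ = true ∧
            g ⟨(⟨q₀, ({v} : Set (α q₀))⟩, c₀'), h₀'⟩ = false} := by
      rw [← measure_union_add_inter _ MeasurableSet.of_discrete]
      have h1 : S ({g | g ⟨(⟨q₀, ({v} : Set (α q₀))⟩, c₀), h₀⟩ = true ∧
            g ⟨(⟨q₀, ({u} : Set (α q₀))⟩, c₀'), h₀'⟩ = true} ∩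
          {g | g ⟨(⟨q₀, ({v} : Set (α q₀))⟩, c₀), h₀⟩ = true ∧
            g ⟨(⟨q₀, ({u'} : Set (α q₀))⟩, c₀'), h₀'⟩ = true}) = 0 := by
        refine measure_mono_null ?_ (n3 c₀' h₀' u u' huu')
        intro g hg
        exact ⟨hg.1.2, hg.2.2⟩
      rw [h1, add_zero]
      calc S ({g | g ⟨(⟨q₀, ({v} : Set (α q₀))⟩, c₀), h₀⟩ = true ∧
            g ⟨(⟨q₀, ({u} : Set (α q₀))⟩, c₀'), h₀'⟩ = true} ∪
          {g | g ⟨(⟨q₀, ({v} : Set (α q₀))⟩, c₀), h₀⟩ = true ∧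
            g ⟨(⟨q₀, ({u'} : Set (α q₀))⟩, c₀'), h₀'⟩ = true}) ≤
          S ({g | g ⟨(⟨q₀, ({v} : Set (α q₀))⟩, c₀), h₀⟩ = true ∧
              g ⟨(⟨q₀, ({v} : Set (α q₀))⟩, c₀'), h₀'⟩ = false} ∪
            ({g | g ⟨(⟨q₀, ({u} : Set (α q₀))⟩, c₀'), h₀'⟩ = true ∧
              g ⟨(⟨q₀, ({v} : Set (α q₀))⟩, c₀'), h₀'⟩ = true} ∪
             {g | g ⟨(⟨q₀, ({u'} : Set (α q₀))⟩, c₀'), h₀'⟩ = true ∧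
              g ⟨(⟨q₀, ({v} : Set (α q₀))⟩, c₀'), h₀'⟩ = true})) := by
            refine measure_mono ?_
            rintro g (⟨h1, h2⟩ | ⟨h1, h2⟩) <;>
              rcases Bool.eq_false_or_eq_true (g ⟨(⟨q₀, ({v} : Set (α q₀))⟩, c₀'), h₀'⟩)
                with h | h
            · exact Or.inr (Or.inl ⟨h2, h⟩)
            · exact Or.inl ⟨h1, h⟩
            · exact Or.inr (Or.inr ⟨h2, h⟩)
            · exact Or.inl ⟨h1, h⟩
        _ ≤ S {g | g ⟨(⟨q₀, ({v} : Set (α q₀))⟩, c₀), h₀⟩ = true ∧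
              g ⟨(⟨q₀, ({v} : Set (α q₀))⟩, c₀'), h₀'⟩ = false} +
            S ({g | g ⟨(⟨q₀, ({u} : Set (α q₀))⟩, c₀'), h₀'⟩ = true ∧
              g ⟨(⟨q₀, ({v} : Set (α q₀))⟩, c₀'), h₀'⟩ = true} ∪
             {g | g ⟨(⟨q₀, ({u'} : Set (α q₀))⟩, c₀'), h₀'⟩ = true ∧
              g ⟨(⟨q₀, ({v} : Set (α q₀))⟩, c₀'), h₀'⟩ = true}) := measure_union_le _ _
        _ = _ := by
            rw [measure_union_null (n3 c₀' h₀' u v huv) (n3 c₀' h₀' u' v hu'v), add_zero]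
    rw [← hE1 v hv, ← ENNReal.toReal_add (measure_ne_top _ _) (measure_ne_top _ _)]
    exact ENNReal.toReal_mono (measure_ne_top _ _) hsum
  -- row bound
  have hrow : ∀ u v v' : α q₀, v ≠ v' → u ≠ v → u ≠ v' →
      (μ c₀).map (fun x => x ⟨q₀, h₀⟩) {u} < (μ c₀').map (fun x => x ⟨q₀, h₀'⟩) {u} →
      (S {g | g ⟨(⟨q₀, ({v} : Set (α q₀))⟩, c₀), h₀⟩ = true ∧
            g ⟨(⟨q₀, ({u} : Set (α q₀))⟩, c₀'), h₀'⟩ = true}).toReal +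
      (S {g | g ⟨(⟨q₀, ({v'} : Set (α q₀))⟩, c₀), h₀⟩ = true ∧
            g ⟨(⟨q₀, ({u} : Set (α q₀))⟩, c₀'), h₀'⟩ = true}).toReal ≤
      ((μ c₀').map (fun x => x ⟨q₀, h₀'⟩) {u}).toReal -
      ((μ c₀).map (fun x => x ⟨q₀, h₀⟩) {u}).toReal := by
    intro u v v' hvv' huv huv' hu
    have hsum : S {g | g ⟨(⟨q₀, ({v} : Set (α q₀))⟩, c₀), h₀⟩ = true ∧
            g ⟨(⟨q₀, ({u} : Set (α q₀))⟩, c₀'), h₀'⟩ = true} +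
        S {g | g ⟨(⟨q₀, ({v'} : Set (α q₀))⟩, c₀), h₀⟩ = true ∧
            g ⟨(⟨q₀, ({u} : Set (α q₀))⟩, c₀'), h₀'⟩ = true} ≤
        S {g | g ⟨(⟨q₀, ({u} : Set (α q₀))⟩, c₀), h₀⟩ = false ∧
            g ⟨(⟨q₀, ({u} : Set (α q₀))⟩, c₀'), h₀'⟩ = true} := by
      rw [← measure_union_add_inter _ MeasurableSet.of_discrete]
      have h1 : S ({g | g ⟨(⟨q₀, ({v} : Set (α q₀))⟩, c₀), h₀⟩ = true ∧
            g ⟨(⟨q₀, ({u} : Set (α q₀))⟩, c₀'), h₀'⟩ = true} ∩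
          {g | g ⟨(⟨q₀, ({v'} : Set (α q₀))⟩, c₀), h₀⟩ = true ∧
            g ⟨(⟨q₀, ({u} : Set (α q₀))⟩, c₀'), h₀'⟩ = true}) = 0 := by
        refine measure_mono_null ?_ (n3 c₀ h₀ v v' hvv')
        intro g hg
        exact ⟨hg.1.1, hg.2.1⟩
      rw [h1, add_zero]
      calc S ({g | g ⟨(⟨q₀, ({v} : Set (α q₀))⟩, c₀), h₀⟩ = true ∧
            g ⟨(⟨q₀, ({u} : Set (α q₀))⟩, c₀'), h₀'⟩ = true} ∪
          {g | g ⟨(⟨q₀, ({v'} : Set (α q₀))⟩, c₀), h₀⟩ = true ∧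
            g ⟨(⟨q₀, ({u} : Set (α q₀))⟩, c₀'), h₀'⟩ = true}) ≤
          S ({g | g ⟨(⟨q₀, ({u} : Set (α q₀))⟩, c₀), h₀⟩ = false ∧
              g ⟨(⟨q₀, ({u} : Set (α q₀))⟩, c₀'), h₀'⟩ = true} ∪
            ({g | g ⟨(⟨q₀, ({u} : Set (α q₀))⟩, c₀), h₀⟩ = true ∧
              g ⟨(⟨q₀, ({v} : Set (α q₀))⟩, c₀), h₀⟩ = true} ∪
             {g | g ⟨(⟨q₀, ({u} : Set (α q₀))⟩, c₀), h₀⟩ = true ∧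
              g ⟨(⟨q₀, ({v'} : Set (α q₀))⟩, c₀), h₀⟩ = true})) := by
            refine measure_mono ?_
            rintro g (⟨h1, h2⟩ | ⟨h1, h2⟩) <;>
              rcases Bool.eq_false_or_eq_true (g ⟨(⟨q₀, ({u} : Set (α q₀))⟩, c₀), h₀⟩)
                with h | h
            · exact Or.inr (Or.inl ⟨h, h1⟩)
            · exact Or.inl ⟨h, h2⟩
            · exact Or.inr (Or.inr ⟨h, h1⟩)
            · exact Or.inl ⟨h, h2⟩
        _ ≤ S {g | g ⟨(⟨q₀, ({u} : Set (α q₀))⟩, c₀), h₀⟩ = false ∧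
              g ⟨(⟨q₀, ({u} : Set (α q₀))⟩, c₀'), h₀'⟩ = true} +
            S ({g | g ⟨(⟨q₀, ({u} : Set (α q₀))⟩, c₀), h₀⟩ = true ∧
              g ⟨(⟨q₀, ({v} : Set (α q₀))⟩, c₀), h₀⟩ = true} ∪
             {g | g ⟨(⟨q₀, ({u} : Set (α q₀))⟩, c₀), h₀⟩ = true ∧
              g ⟨(⟨q₀, ({v'} : Set (α q₀))⟩, c₀), h₀⟩ = true}) := measure_union_le _ _
        _ = _ := by
            rw [measure_union_null (n3 c₀ h₀ u v huv) (n3 c₀ h₀ u v' huv'), add_zero]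
    rw [← hE2 u hu, ← ENNReal.toReal_add (measure_ne_top _ _) (measure_ne_top _ _)]
    exact ENNReal.toReal_mono (measure_ne_top _ _) hsum
  -- extract the four witnesses and conclude
  rw [Set.not_subsingleton_iff] at hdom hdom'
  obtain ⟨a, ha, b, hb, hab⟩ := hdom
  obtain ⟨a', ha', b', hb', ha'b'⟩ := hdom'
  simp only [Set.mem_setOf_eq] at ha hb ha' hb'
  have haa' : a ≠ a' := fun h => absurd ha' (lt_asymm (h ▸ ha))
  have hab' : a ≠ b' := fun h => absurd hb' (lt_asymm (h ▸ ha))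
  have hba' : b ≠ a' := fun h => absurd ha' (lt_asymm (h ▸ hb))
  have hbb' : b ≠ b' := fun h => absurd hb' (lt_asymm (h ▸ hb))
  have hpa : ((μ c₀).map (fun x => x ⟨q₀, h₀⟩) {a}).toReal <
      ((μ c₀').map (fun x => x ⟨q₀, h₀'⟩) {a}).toReal :=
    (ENNReal.toReal_lt_toReal (measure_ne_top _ _) (measure_ne_top _ _)).mpr ha
  have hpb : ((μ c₀).map (fun x => x ⟨q₀, h₀⟩) {b}).toReal <
      ((μ c₀').map (fun x => x ⟨q₀, h₀'⟩) {b}).toReal :=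
    (ENNReal.toReal_lt_toReal (measure_ne_top _ _) (measure_ne_top _ _)).mpr hb
  have hpa' : ((μ c₀').map (fun x => x ⟨q₀, h₀'⟩) {a'}).toReal <
      ((μ c₀).map (fun x => x ⟨q₀, h₀⟩) {a'}).toReal :=
    (ENNReal.toReal_lt_toReal (measure_ne_top _ _) (measure_ne_top _ _)).mpr ha'
  have hpb' : ((μ c₀').map (fun x => x ⟨q₀, h₀'⟩) {b'}).toReal <
      ((μ c₀).map (fun x => x ⟨q₀, h₀⟩) {b'}).toReal :=
    (ENNReal.toReal_lt_toReal (measure_ne_top _ _) (measure_ne_top _ _)).mpr hb'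
  have d1 := hdich a a' haa' ha ha'
  have d2 := hdich b a' hba' hb ha'
  have d3 := hdich a b' hab' ha hb'
  have d4 := hdich b b' hbb' hb hb'
  have col1 := hcol a b a' hab haa' hba' ha'
  have col2 := hcol a b b' hab hab' hbb' hb'
  have row1 := hrow a a' b' ha'b' haa' hab' ha
  have row2 := hrow b a' b' ha'b' hba' hbb' hb
  rcases d1 with h1 | h1 <;> rcases d2 with h2 | h2 <;> rcases d3 with h3 | h3 <;>
    rcases d4 with h4 | h4 <;> linarith
end

section
/- Let a finite system of binary random variables be given (contexts C, contents Q, decidable relation ≺, within-context measures μ_c), and let ≺' be a second decidable relation between contents and contexts such that q ≺' c implies q ≺ c. Define the subsystem to be the finite system of binary random variables with the same C and Q, relation ≺', and within-context measure in context c equal to the pushforward of μ_c along the restriction map from ({q : Q // q ≺ c} → Bool) to ({q : Q // q ≺' c} → Bool). If the original system is noncontextual, then the subsystem is noncontextual. -/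
open MeasureTheory

/-- A finite system of binary random variables (contexts `C`, contents `Q`, relation
`rel`, within-context measures `μ c`) is noncontextual if it has a coupling in which
every pair of content-sharing variables attains the maximal probability of
agreement allowed by its marginals. -/
def Noncontextual {C Q : Type*} (rel : Q → C → Prop)
    (μ : ∀ c : C, Measure ({q : Q // rel q c} → Bool)) : Prop :=
  ∃ S : Measure ({x : Q × C // rel x.1 x.2} → Bool),
    IsProbabilityMeasure S ∧
    (∀ c : C, S.map (fun g (q : {q : Q // rel q c}) => g ⟨(q.1, c), q.2⟩) = μ c) ∧
    (∀ (q : Q) (c c' : C) (h : rel q c) (h' : rel q c'),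
      (S {g | g ⟨(q, c), h⟩ = g ⟨(q, c'), h'⟩}).toReal =
        1 - |(μ c {f | f ⟨q, h⟩ = true}).toReal - (μ c' {f | f ⟨q, h'⟩ = true}).toReal|)

/-- A subsystem of a noncontextual finite system of binary random variables is
noncontextual. -/
theorem subsystem_of_noncontextual_is_noncontextual
    {C Q : Type*} [Fintype C] [Fintype Q]
    (rel : Q → C → Prop) [∀ q c, Decidable (rel q c)]
    (rel' : Q → C → Prop) [∀ q c, Decidable (rel' q c)]
    (hsub : ∀ q c, rel' q c → rel q c)
    (μ : ∀ c : C, Measure ({q : Q // rel q c} → Bool))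
    (hμ : ∀ c, IsProbabilityMeasure (μ c))
    (hnc : Noncontextual rel μ) :
    Noncontextual rel'
      (fun c => (μ c).map (fun f (q : {q : Q // rel' q c}) => f ⟨q.1, hsub q.1 c q.2⟩)) := by
  obtain ⟨S, hS, hmarg, hagree⟩ := hnc
  -- the restriction map
  set res : ({x : Q × C // rel x.1 x.2} → Bool) → ({x : Q × C // rel' x.1 x.2} → Bool) :=
    fun g x => g ⟨x.1, hsub x.1.1 x.1.2 x.2⟩ with hres
  refine ⟨S.map res, ?_, ?_, ?_⟩
  · exact Measure.isProbabilityMeasure_map (measurable_of_countable res).aemeasurable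
  · intro c
    simp only [← hmarg c, Measure.map_map (measurable_of_countable _) (measurable_of_countable _)]
    rfl
  · intro q c c' h h'
    have h1 : (S.map res) {g | g ⟨(q, c), h⟩ = g ⟨(q, c'), h'⟩}
        = S {g | g ⟨(q, c), hsub q c h⟩ = g ⟨(q, c'), hsub q c' h'⟩} := by
      rw [Measure.map_apply (measurable_of_countable res) ((Set.toFinite _).measurableSet)]
      rfl
    have h2 : ((μ c).map (fun f (q : {q : Q // rel' q c}) => f ⟨q.1, hsub q.1 c q.2⟩))
          {f | f ⟨q, h⟩ = true} = (μ c) {f | f ⟨q, hsub q c h⟩ = true} := by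
      rw [Measure.map_apply (measurable_of_countable _) ((Set.toFinite _).measurableSet)]
      rfl
    have h3 : ((μ c').map (fun f (q : {q : Q // rel' q c'}) => f ⟨q.1, hsub q.1 c' q.2⟩))
          {f | f ⟨q, h'⟩ = true} = (μ c') {f | f ⟨q, hsub q c' h'⟩ = true} := by
      rw [Measure.map_apply (measurable_of_countable _) ((Set.toFinite _).measurableSet)]
      rfl
    simp only [h1, h2, h3]
    exact hagree q c c' (hsub q c h) (hsub q c' h')
end

section
/- Let a finite system of binary random variables be given (contexts C, contents Q, decidable relation ≺, within-context measures μ_c). Let q₀ : Q be a content with ¬(q₀ ≺ c) for all c, let C₀ ⊆ C, and let b : C → Bool. Define the extended system with relation q ≺' c iff (q ≺ c) ∨ (q = q₀ ∧ c ∈ C₀), and with within-context measure μ'_c equal to μ_c when c ∉ C₀, and, when c ∈ C₀, equal to the pushforward of μ_c along the map that extends each function f : {q // q ≺ c} → Bool to {q // q ≺' c} by assigning the value b c to the coordinate q₀ (so the new variable in each context c ∈ C₀ is deterministic, equal to b c with probability 1). Then the extended system is noncontextual if and only if the original system is noncontextual. -/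
open MeasureTheory

private lemma mS_aux {α : Type*} [Finite α] (s : Set (α → Bool)) : MeasurableSet s :=
  (Set.to_countable s).measurableSet

/-- Adding to a finite system of binary random variables a deterministic variable
(with value `b c`, attained with probability 1) of a fresh content `q₀` in each of
the contexts of `C₀` does not change the system's (non)contextuality. -/
theorem noncontextual_iff_extension_by_deterministic
    {C Q : Type*} [Fintype C] [Fintype Q]
    (rel : Q → C → Prop) [∀ q c, Decidable (rel q c)]
    (μ : ∀ c : C, Measure ({q : Q // rel q c} → Bool))
    (hμ : ∀ c, IsProbabilityMeasure (μ c))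
    (q₀ : Q) (hq₀ : ∀ c, ¬ rel q₀ c)
    (C₀ : Set C) (b : C → Bool) :
    Noncontextual (fun q c => rel q c ∨ (q = q₀ ∧ c ∈ C₀))
      (fun c => (μ c).map
        (fun f (q' : {q : Q // rel q c ∨ (q = q₀ ∧ c ∈ C₀)}) =>
          if h : rel q'.1 c then f ⟨q'.1, h⟩ else b c))
    ↔ Noncontextual rel μ := by
  classical
  set rel' : Q → C → Prop := fun q c => rel q c ∨ (q = q₀ ∧ c ∈ C₀) with hrel'
  have p'_eq : ∀ (c : C) (q : Q) (h : rel q c) (h' : rel' q c),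
      (μ c).map (fun f (q' : {q : Q // rel' q c}) =>
          if h : rel q'.1 c then f ⟨q'.1, h⟩ else b c) {f | f ⟨q, h'⟩ = true}
        = μ c {f | f ⟨q, h⟩ = true} := by
    intro c q h h'
    rw [Measure.map_apply (measurable_of_countable _) (mS_aux _)]
    congr 1
    ext f
    simp [dif_pos h]
  constructor
  · rintro ⟨S', hS'prob, hS'marg, hS'agree⟩
    refine ⟨S'.map (fun g (x : {x : Q × C // rel x.1 x.2}) => g ⟨x.1, Or.inl x.2⟩),
      Measure.isProbabilityMeasure_map (measurable_of_countable _).aemeasurable, ?_, ?_⟩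
    · intro c
      rw [Measure.map_map (measurable_of_countable _) (measurable_of_countable _)]
      have h1 : ((fun (g : {x : Q × C // rel x.1 x.2} → Bool) (q : {q : Q // rel q c}) => g ⟨(q.1, c), q.2⟩) ∘
          (fun (g : {x : Q × C // rel' x.1 x.2} → Bool) (x : {x : Q × C // rel x.1 x.2}) => g ⟨x.1, Or.inl x.2⟩))
          = (fun (f : {q : Q // rel' q c} → Bool) (q : {q : Q // rel q c}) =>
              f ⟨q.1, Or.inl q.2⟩) ∘
            (fun g (q : {q : Q // rel' q c}) => g ⟨(q.1, c), q.2⟩) := rfl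
      rw [h1, ← Measure.map_map (measurable_of_countable _) (measurable_of_countable _),
        hS'marg c, Measure.map_map (measurable_of_countable _) (measurable_of_countable _)]
      have h2 : ((fun (f : {q : Q // rel' q c} → Bool) (q : {q : Q // rel q c}) =>
              f ⟨q.1, Or.inl q.2⟩) ∘
          (fun f (q' : {q : Q // rel' q c}) => if h : rel q'.1 c then f ⟨q'.1, h⟩ else b c))
          = id := by
        funext f
        funext q
        simp [dif_pos q.2]
      rw [h2, Measure.map_id]
    · intro q c c' h h'
      have key := hS'agree q c c' (Or.inl h) (Or.inl h')
      beta_reduce at key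
      rw [p'_eq c q h (Or.inl h), p'_eq c' q h' (Or.inl h')] at key
      rw [Measure.map_apply (measurable_of_countable _) (mS_aux _)]
      exact key
  · rintro ⟨S, hSprob, hSmarg, hSagree⟩
    set e : ({x : Q × C // rel x.1 x.2} → Bool) → ({x : Q × C // rel' x.1 x.2} → Bool) :=
      fun g x' => if h : rel x'.1.1 x'.1.2 then g ⟨x'.1, h⟩ else b x'.1.2 with he
    refine ⟨S.map e, Measure.isProbabilityMeasure_map (measurable_of_countable _).aemeasurable, ?_, ?_⟩
    · intro c
      beta_reduce
      rw [Measure.map_map (measurable_of_countable _) (measurable_of_countable _),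
        ← hSmarg c, Measure.map_map (measurable_of_countable _) (measurable_of_countable _)]
      rfl
    · intro q c c' h h'
      rw [Measure.map_apply (measurable_of_countable _) (mS_aux _)]
      beta_reduce
      rcases h with h | ⟨hq, hc⟩
      · rcases h' with h' | ⟨hq, hc'⟩
        · -- both from the original relation
          have hpre : (e ⁻¹' {g | g ⟨(q, c), Or.inl h⟩ = g ⟨(q, c'), Or.inl h'⟩})
              = {g | g ⟨(q, c), h⟩ = g ⟨(q, c'), h'⟩} := by
            ext g
            simp only [he, Set.mem_preimage, Set.mem_setOf_eq, dif_pos h, dif_pos h']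
          rw [hpre, hSagree q c c' h h', p'_eq c q h (Or.inl h), p'_eq c' q h' (Or.inl h')]
        · exact absurd (hq ▸ h) (hq₀ c)
      · rcases h' with h' | ⟨hq', hc'⟩
        · exact absurd (hq ▸ h') (hq₀ c')
        · subst hq
          have hp : ∀ (c : C) (hh : rel' q c),
              ((μ c).map (fun f (q' : {q : Q // rel' q c}) =>
                  if h : rel q'.1 c then f ⟨q'.1, h⟩ else b c)
                {f | f ⟨q, hh⟩ = true}).toReal = if b c = true then 1 else 0 := by
            intro c hh
            rw [Measure.map_apply (measurable_of_countable _) (mS_aux _)]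
            have h3 : ((fun (f : {q' : Q // rel q' c} → Bool) (q' : {q : Q // rel' q c}) =>
                if h : rel q'.1 c then f ⟨q'.1, h⟩ else b c) ⁻¹' {f | f ⟨q, hh⟩ = true})
                = {f | b c = true} := by
              ext f
              simp [dif_neg (hq₀ c)]
            rw [h3]
            have hinst := hμ c
            rcases Bool.eq_false_or_eq_true (b c) with hb | hb <;>
              simp [hb, Set.setOf_true, Set.setOf_false, measure_univ]
          have hpre : (e ⁻¹' {g | g ⟨(q, c), Or.inr ⟨rfl, hc⟩⟩ = g ⟨(q, c'), Or.inr ⟨rfl, hc'⟩⟩})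
              = {g | b c = b c'} := by
            ext g
            simp only [he, Set.mem_preimage, Set.mem_setOf_eq]
            rw [dif_neg (hq₀ c), dif_neg (hq₀ c')]
          rw [hpre, hp c _, hp c' _]
          by_cases hbb : b c = b c'
          · rw [hbb]
            have h4 : {g : {x : Q × C // rel x.1 x.2} → Bool | b c' = b c'} = Set.univ := by
              simp
            rw [h4, hSprob.measure_univ]
            simp
          · have h5 : {g : {x : Q × C // rel x.1 x.2} → Bool | b c = b c'} = ∅ := by
              ext g; simp [hbb]
            rw [h5]
            rcases Bool.eq_false_or_eq_true (b c) with hb | hb <;>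
              rcases Bool.eq_false_or_eq_true (b c') with hb' | hb' <;>
              simp_all
end

section
/- Let a finite system of binary random variables be given (contexts C, contents Q, decidable relation ≺, within-context measures μ_c). Let q₁ : Q be a content with ¬(q₁ ≺ c) for all c, let c₁ : C be a context with ¬(q ≺ c₁) for all q, and let ν be any probability measure on Bool. Define the extended system with relation q ≺' c iff (q ≺ c) ∨ (q = q₁ ∧ c = c₁), with within-context measure equal to μ_c for c ≠ c₁, and in context c₁ the measure on ({q // q ≺' c₁} → Bool) induced by ν on the single coordinate q₁ (so the new variable shares neither its content nor its context with any other variable of the system). Then the extended system is noncontextual if and only if the original system is noncontextual. -/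
open MeasureTheory

private lemma probMeasure_eq_of_subsingleton {α : Type*} [MeasurableSpace α] [Subsingleton α]
    (μ ν : Measure α) [IsProbabilityMeasure μ] [IsProbabilityMeasure ν] : μ = ν := by
  ext s hs
  rcases Set.eq_empty_or_nonempty s with rfl | ⟨x, hx⟩
  · simp
  · have hsu : s = Set.univ := Set.eq_univ_of_forall fun y => (Subsingleton.elim x y) ▸ hx
    simp [hsu]

/-- Adding to a finite system of binary random variables a variable, with an
arbitrary distribution `ν` on `Bool`, which shares neither its content `q₁` nor its
context `c₁` with any other variable of the system, does not change the system's
(non)contextuality. -/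
theorem noncontextual_iff_extension_by_isolated_variable
    {C Q : Type*} [Fintype C] [Fintype Q] [DecidableEq C]
    (rel : Q → C → Prop) [∀ q c, Decidable (rel q c)]
    (μ : ∀ c : C, Measure ({q : Q // rel q c} → Bool))
    (hμ : ∀ c, IsProbabilityMeasure (μ c))
    (q₁ : Q) (hq₁ : ∀ c, ¬ rel q₁ c)
    (c₁ : C) (hc₁ : ∀ q, ¬ rel q c₁)
    (ν : Measure Bool) [IsProbabilityMeasure ν] :
    Noncontextual (fun q c => rel q c ∨ (q = q₁ ∧ c = c₁))
      (fun c =>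
        if h : c = c₁ then
          ν.map (fun v (_ : {q : Q // rel q c ∨ (q = q₁ ∧ c = c₁)}) => v)
        else
          (μ c).map (fun f (q' : {q : Q // rel q c ∨ (q = q₁ ∧ c = c₁)}) =>
            f ⟨q'.1, q'.2.resolve_right (fun hh => h hh.2)⟩))
    ↔ Noncontextual rel μ := by
  classical
  constructor
  · -- extended noncontextual → original noncontextual
    rintro ⟨S, hS, hmarg, hagree⟩
    haveI := hS
    refine ⟨S.map (fun g (x : {x : Q × C // rel x.1 x.2}) => g ⟨x.1, Or.inl x.2⟩), ?_, ?_, ?_⟩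
    · exact Measure.isProbabilityMeasure_map (measurable_of_countable _).aemeasurable
    · intro c
      by_cases hc : c = c₁
      · subst hc
        -- now `c₁` has been renamed to `c`; the context `c` records no old variable
        haveI : IsEmpty {q : Q // rel q c} := ⟨fun q => hc₁ q.1 q.2⟩
        haveI := hμ c
        haveI : IsProbabilityMeasure (S.map
            (fun g (x : {x : Q × C // rel x.1 x.2}) => g ⟨x.1, Or.inl x.2⟩)) :=
          Measure.isProbabilityMeasure_map (measurable_of_countable _).aemeasurable
        haveI : IsProbabilityMeasure ((S.map
            (fun g (x : {x : Q × C // rel x.1 x.2}) => g ⟨x.1, Or.inl x.2⟩)).map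
            (fun g (q : {q : Q // rel q c}) => g ⟨(q.1, c), q.2⟩)) :=
          Measure.isProbabilityMeasure_map (measurable_of_countable _).aemeasurable
        exact probMeasure_eq_of_subsingleton _ _
      · have h3 := hmarg c
        simp only [dif_neg hc] at h3
        calc (S.map (fun g (x : {x : Q × C // rel x.1 x.2}) => g ⟨x.1, Or.inl x.2⟩)).map
              (fun g (q : {q : Q // rel q c}) => g ⟨(q.1, c), q.2⟩)
            = S.map ((fun g (q : {q : Q // rel q c}) => g ⟨(q.1, c), q.2⟩) ∘
                (fun g (x : {x : Q × C // rel x.1 x.2}) => g ⟨x.1, Or.inl x.2⟩)) :=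
              Measure.map_map (measurable_of_countable _) (measurable_of_countable _)
          _ = S.map ((fun g (q : {q : Q // rel q c}) => g ⟨q.1, Or.inl q.2⟩) ∘
                (fun g (q : {q : Q // rel q c ∨ (q = q₁ ∧ c = c₁)}) =>
                  g ⟨(q.1, c), q.2⟩)) := rfl
          _ = (S.map (fun g (q : {q : Q // rel q c ∨ (q = q₁ ∧ c = c₁)}) =>
                  g ⟨(q.1, c), q.2⟩)).map
                (fun g (q : {q : Q // rel q c}) => g ⟨q.1, Or.inl q.2⟩) :=
              (Measure.map_map (measurable_of_countable _) (measurable_of_countable _)).symm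
          _ = ((μ c).map (fun f (q' : {q : Q // rel q c ∨ (q = q₁ ∧ c = c₁)}) =>
                  f ⟨q'.1, q'.2.resolve_right (fun hh => hc hh.2)⟩)).map
                (fun g (q : {q : Q // rel q c}) => g ⟨q.1, Or.inl q.2⟩) :=
              congrArg (Measure.map _) h3
          _ = (μ c).map ((fun g (q : {q : Q // rel q c}) => g ⟨q.1, Or.inl q.2⟩) ∘
                (fun f (q' : {q : Q // rel q c ∨ (q = q₁ ∧ c = c₁)}) =>
                  f ⟨q'.1, q'.2.resolve_right (fun hh => hc hh.2)⟩)) :=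
              Measure.map_map (measurable_of_countable _) (measurable_of_countable _)
          _ = μ c := Measure.map_id
    · intro q c c' h h'
      have hc : c ≠ c₁ := fun e => hc₁ q (e ▸ h)
      have hc' : c' ≠ c₁ := fun e => hc₁ q (e ▸ h')
      have H := hagree q c c' (Or.inl h) (Or.inl h')
      simp only [dif_neg hc, dif_neg hc'] at H
      rw [Measure.map_apply (measurable_of_countable _) ((Set.to_countable _).measurableSet),
        Measure.map_apply (measurable_of_countable _) ((Set.to_countable _).measurableSet)] at H
      rw [Measure.map_apply (measurable_of_countable _) ((Set.to_countable _).measurableSet)]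
      exact H
  · -- original noncontextual → extended noncontextual
    rintro ⟨S, hS, hmarg, hagree⟩
    haveI := hS
    refine ⟨(S.prod ν).map
        (fun (p : ({x : Q × C // rel x.1 x.2} → Bool) × Bool)
            (x : {x : Q × C // rel x.1 x.2 ∨ (x.1 = q₁ ∧ x.2 = c₁)}) =>
          if hx : rel x.1.1 x.1.2 then p.1 ⟨x.1, hx⟩ else p.2), ?_, ?_, ?_⟩
    · exact Measure.isProbabilityMeasure_map (measurable_of_countable _).aemeasurable
    · intro c
      by_cases hc : c = c₁
      · subst hc
        -- `c₁` has been renamed to `c`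
        simp only [dif_pos]
        have hfun : ((fun g (q : {q : Q // rel q c ∨ (q = q₁ ∧ c = c)}) =>
              g ⟨(q.1, c), q.2⟩) ∘
            (fun (p : ({x : Q × C // rel x.1 x.2} → Bool) × Bool)
                (x : {x : Q × C // rel x.1 x.2 ∨ (x.1 = q₁ ∧ x.2 = c)}) =>
              if hx : rel x.1.1 x.1.2 then p.1 ⟨x.1, hx⟩ else p.2))
            = (fun v (_ : {q : Q // rel q c ∨ (q = q₁ ∧ c = c)}) => v) ∘ Prod.snd := by
          funext p
          funext q'
          exact dif_neg (hc₁ q'.1)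
        have hsnd : (S.prod ν).map Prod.snd = ν := by
          rw [← Measure.snd]
          exact Measure.snd_prod
        calc ((S.prod ν).map
              (fun (p : ({x : Q × C // rel x.1 x.2} → Bool) × Bool)
                  (x : {x : Q × C // rel x.1 x.2 ∨ (x.1 = q₁ ∧ x.2 = c)}) =>
                if hx : rel x.1.1 x.1.2 then p.1 ⟨x.1, hx⟩ else p.2)).map
              (fun g (q : {q : Q // rel q c ∨ (q = q₁ ∧ c = c)}) => g ⟨(q.1, c), q.2⟩)
            = (S.prod ν).map ((fun g (q : {q : Q // rel q c ∨ (q = q₁ ∧ c = c)}) =>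
                  g ⟨(q.1, c), q.2⟩) ∘
                (fun (p : ({x : Q × C // rel x.1 x.2} → Bool) × Bool)
                    (x : {x : Q × C // rel x.1 x.2 ∨ (x.1 = q₁ ∧ x.2 = c)}) =>
                  if hx : rel x.1.1 x.1.2 then p.1 ⟨x.1, hx⟩ else p.2)) :=
              Measure.map_map (measurable_of_countable _) (measurable_of_countable _)
          _ = (S.prod ν).map
                ((fun v (_ : {q : Q // rel q c ∨ (q = q₁ ∧ c = c)}) => v) ∘ Prod.snd) :=
              congrArg (fun f => Measure.map f (S.prod ν)) hfun
          _ = ((S.prod ν).map Prod.snd).map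
                (fun v (_ : {q : Q // rel q c ∨ (q = q₁ ∧ c = c)}) => v) :=
              (Measure.map_map (measurable_of_countable _) (measurable_of_countable _)).symm
          _ = ν.map (fun v (_ : {q : Q // rel q c ∨ (q = q₁ ∧ c = c)}) => v) :=
              congrArg (Measure.map _) hsnd
      · simp only [dif_neg hc]
        have hfun : ((fun g (q : {q : Q // rel q c ∨ (q = q₁ ∧ c = c₁)}) =>
              g ⟨(q.1, c), q.2⟩) ∘
            (fun (p : ({x : Q × C // rel x.1 x.2} → Bool) × Bool)
                (x : {x : Q × C // rel x.1 x.2 ∨ (x.1 = q₁ ∧ x.2 = c₁)}) =>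
              if hx : rel x.1.1 x.1.2 then p.1 ⟨x.1, hx⟩ else p.2))
            = (fun f (q' : {q : Q // rel q c ∨ (q = q₁ ∧ c = c₁)}) =>
                f ⟨q'.1, q'.2.resolve_right (fun hh => hc hh.2)⟩) ∘
              ((fun g (q : {q : Q // rel q c}) => g ⟨(q.1, c), q.2⟩) ∘ Prod.fst) := by
          funext p
          funext q'
          exact dif_pos (q'.2.resolve_right (fun hh => hc hh.2))
        have hfst : (S.prod ν).map Prod.fst = S := by
          rw [← Measure.fst]
          exact Measure.fst_prod
        have hmid : (S.prod ν).map
              ((fun g (q : {q : Q // rel q c}) => g ⟨(q.1, c), q.2⟩) ∘ Prod.fst) = μ c := by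
          rw [← Measure.map_map (measurable_of_countable _) (measurable_of_countable _),
            hfst, hmarg c]
        calc ((S.prod ν).map
              (fun (p : ({x : Q × C // rel x.1 x.2} → Bool) × Bool)
                  (x : {x : Q × C // rel x.1 x.2 ∨ (x.1 = q₁ ∧ x.2 = c₁)}) =>
                if hx : rel x.1.1 x.1.2 then p.1 ⟨x.1, hx⟩ else p.2)).map
              (fun g (q : {q : Q // rel q c ∨ (q = q₁ ∧ c = c₁)}) => g ⟨(q.1, c), q.2⟩)
            = (S.prod ν).map ((fun g (q : {q : Q // rel q c ∨ (q = q₁ ∧ c = c₁)}) =>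
                  g ⟨(q.1, c), q.2⟩) ∘
                (fun (p : ({x : Q × C // rel x.1 x.2} → Bool) × Bool)
                    (x : {x : Q × C // rel x.1 x.2 ∨ (x.1 = q₁ ∧ x.2 = c₁)}) =>
                  if hx : rel x.1.1 x.1.2 then p.1 ⟨x.1, hx⟩ else p.2)) :=
              Measure.map_map (measurable_of_countable _) (measurable_of_countable _)
          _ = (S.prod ν).map
                ((fun f (q' : {q : Q // rel q c ∨ (q = q₁ ∧ c = c₁)}) =>
                    f ⟨q'.1, q'.2.resolve_right (fun hh => hc hh.2)⟩) ∘
                  ((fun g (q : {q : Q // rel q c}) => g ⟨(q.1, c), q.2⟩) ∘ Prod.fst)) :=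
              congrArg (fun f => Measure.map f (S.prod ν)) hfun
          _ = ((S.prod ν).map
                ((fun g (q : {q : Q // rel q c}) => g ⟨(q.1, c), q.2⟩) ∘ Prod.fst)).map
                (fun f (q' : {q : Q // rel q c ∨ (q = q₁ ∧ c = c₁)}) =>
                  f ⟨q'.1, q'.2.resolve_right (fun hh => hc hh.2)⟩) :=
              (Measure.map_map (measurable_of_countable _) (measurable_of_countable _)).symm
          _ = (μ c).map (fun f (q' : {q : Q // rel q c ∨ (q = q₁ ∧ c = c₁)}) =>
                  f ⟨q'.1, q'.2.resolve_right (fun hh => hc hh.2)⟩) :=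
              congrArg (Measure.map _) hmid
    · intro q c c' h h'
      rcases h with h | ⟨hq, hcc⟩
      · rcases h' with h' | ⟨hq', hcc'⟩
        · -- both old variables
          have hc : c ≠ c₁ := fun e => hc₁ q (e ▸ h)
          have hc' : c' ≠ c₁ := fun e => hc₁ q (e ▸ h')
          simp only [dif_neg hc, dif_neg hc']
          rw [Measure.map_apply (measurable_of_countable _) ((Set.to_countable _).measurableSet),
            Measure.map_apply (measurable_of_countable _) ((Set.to_countable _).measurableSet),
            Measure.map_apply (measurable_of_countable _) ((Set.to_countable _).measurableSet)]
          have hpre : ((fun (p : ({x : Q × C // rel x.1 x.2} → Bool) × Bool)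
                  (x : {x : Q × C // rel x.1 x.2 ∨ (x.1 = q₁ ∧ x.2 = c₁)}) =>
                if hx : rel x.1.1 x.1.2 then p.1 ⟨x.1, hx⟩ else p.2) ⁻¹'
                {g : {x : Q × C // rel x.1 x.2 ∨ (x.1 = q₁ ∧ x.2 = c₁)} → Bool |
                  g ⟨(q, c), Or.inl h⟩ = g ⟨(q, c'), Or.inl h'⟩})
              = {g : {x : Q × C // rel x.1 x.2} → Bool |
                  g ⟨(q, c), h⟩ = g ⟨(q, c'), h'⟩} ×ˢ (Set.univ : Set Bool) := by
            ext p
            simp only [Set.mem_preimage, Set.mem_setOf_eq, Set.mem_prod, Set.mem_univ, and_true,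
              dif_pos h, dif_pos h']
          have key : (S.prod ν) ((fun (p : ({x : Q × C // rel x.1 x.2} → Bool) × Bool)
                  (x : {x : Q × C // rel x.1 x.2 ∨ (x.1 = q₁ ∧ x.2 = c₁)}) =>
                if hx : rel x.1.1 x.1.2 then p.1 ⟨x.1, hx⟩ else p.2) ⁻¹'
                {g : {x : Q × C // rel x.1 x.2 ∨ (x.1 = q₁ ∧ x.2 = c₁)} → Bool |
                  g ⟨(q, c), Or.inl h⟩ = g ⟨(q, c'), Or.inl h'⟩})
              = S {g : {x : Q × C // rel x.1 x.2} → Bool |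
                  g ⟨(q, c), h⟩ = g ⟨(q, c'), h'⟩} := by
            rw [hpre, Measure.prod_prod, measure_univ, mul_one]
          exact (congrArg ENNReal.toReal key).trans (hagree q c c' h h')
        · exact absurd (hq' ▸ h) (hq₁ c)
      · subst hq
        subst hcc
        -- `q₁`, `c₁` have been renamed to `q`, `c`
        rcases h' with h' | ⟨hq', hcc'⟩
        · exact absurd h' (hq₁ c')
        · subst hcc'
          -- after this `subst`, the surviving names are `q` and `c'`
          show (((S.prod ν).map
              (fun (p : ({x : Q × C // rel x.1 x.2} → Bool) × Bool)
                  (x : {x : Q × C // rel x.1 x.2 ∨ (x.1 = q ∧ x.2 = c')}) =>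
                if hx : rel x.1.1 x.1.2 then p.1 ⟨x.1, hx⟩ else p.2))
              {g : {x : Q × C // rel x.1 x.2 ∨ (x.1 = q ∧ x.2 = c')} → Bool |
                g ⟨(q, c'), Or.inr ⟨rfl, rfl⟩⟩ = g ⟨(q, c'), Or.inr ⟨rfl, rfl⟩⟩}).toReal
            = 1 - abs ((((if hh : c' = c' then
                    ν.map (fun v (_ : {q' : Q // rel q' c' ∨ (q' = q ∧ c' = c')}) => v)
                  else
                    (μ c').map (fun f (q' : {q' : Q // rel q' c' ∨ (q' = q ∧ c' = c')}) =>
                      f ⟨q'.1, q'.2.resolve_right (fun hh' => hh hh'.2)⟩))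
                  {f | f ⟨q, Or.inr ⟨rfl, rfl⟩⟩ = true}).toReal) -
                (((if hh : c' = c' then
                    ν.map (fun v (_ : {q' : Q // rel q' c' ∨ (q' = q ∧ c' = c')}) => v)
                  else
                    (μ c').map (fun f (q' : {q' : Q // rel q' c' ∨ (q' = q ∧ c' = c')}) =>
                      f ⟨q'.1, q'.2.resolve_right (fun hh' => hh hh'.2)⟩))
                  {f | f ⟨q, Or.inr ⟨rfl, rfl⟩⟩ = true}).toReal))
          rw [sub_self, abs_zero, sub_zero]
          have hsu : {g : {x : Q × C // rel x.1 x.2 ∨ (x.1 = q ∧ x.2 = c')} → Bool |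
              g ⟨(q, c'), Or.inr ⟨rfl, rfl⟩⟩ = g ⟨(q, c'), Or.inr ⟨rfl, rfl⟩⟩} = Set.univ :=
            Set.eq_univ_of_forall fun g => rfl
          rw [hsu]
          haveI : IsProbabilityMeasure ((S.prod ν).map
              (fun (p : ({x : Q × C // rel x.1 x.2} → Bool) × Bool)
                  (x : {x : Q × C // rel x.1 x.2 ∨ (x.1 = q ∧ x.2 = c')}) =>
                if hx : rel x.1.1 x.1.2 then p.1 ⟨x.1, hx⟩ else p.2)) :=
            Measure.isProbabilityMeasure_map (measurable_of_countable _).aemeasurable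
          rw [measure_univ, ENNReal.toReal_one]
end
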